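/- arXiv:1707.00650 — 9 statements merged into one kernel-verified Lean document; each statement's English description precedes it below -/
import Mathlib

section
/- Let P be a q^r-divisible multiset of points in a finite-dimensional F_q-vector space V and let U be a subspace of V of codimension j with 0 ≤ j ≤ r. Then the restricted multiset P∩U is q^{r−j}-divisible as a multiset of points in U. -/
/-
Induction on the codimension `j`. If `U` has codimension `j + 1`, choose `U' ⊇ U` of
codimension `j`; then `W` has codimension 2 in `U'`. The pencil of hyperplanes of `U'` through
`W` has `q + 1` members, each point of `W` lies on all of them and every other point of `U'` on
exactly one. Summing the congruences `#(P ∩ H) ≡ #(P ∩ U') (mod q^(r-j))` over the pencil thus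
gives `q · #(P ∩ W) ≡ q · #(P ∩ U') (mod q^(r-j))`; cancel `q` and compare with
`#(P ∩ U) ≡ #(P ∩ U') (mod q^(r-j))`.
-/

open scoped Classical

/-- A multiset of points (1-dimensional subspaces) `P` in an ambient `F`-vector space `V`
is `q^r`-divisible if all its members are 1-dimensional and for every hyperplane `H`
the cardinality of the restriction `P ∩ H` is congruent to the cardinality of `P`
modulo `q^r`, where `q = Fintype.card F`. -/
def IsDivisible (F : Type) [Field F] [Fintype F] {V : Type} [AddCommGroup V] [Module F V]
    (r : ℕ) (P : Multiset (Submodule F V)) : Prop :=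
  (∀ X ∈ P, Module.finrank F ↥X = 1) ∧
  ∀ H : Submodule F V, Module.finrank F ↥H + 1 = Module.finrank F V →
    Multiset.card (P.filter (fun X => X ≤ H)) ≡ Multiset.card P [MOD (Fintype.card F) ^ r]

open Module

theorem exists_inf_eq_bot_sup_eq_of_le {α : Type*} [Lattice α] [BoundedOrder α]
    [IsModularLattice α] [ComplementedLattice α] {a b : α} (h : a ≤ b) :
    ∃ c ≤ b, a ⊓ c = ⊥ ∧ a ⊔ c = b := by
  obtain ⟨c, hc⟩ := exists_isCompl a
  refine ⟨c ⊓ b, inf_le_right, ?_, ?_⟩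
  · rw [← inf_assoc, hc.inf_eq_bot, bot_inf_eq]
  · rw [← sup_inf_assoc_of_le c h, hc.sup_eq_top, top_inf_eq]

namespace Submodule

variable {F V : Type*} [Field F] [AddCommGroup V] [Module F V]

theorem finrank_sup_of_inf_eq_bot [FiniteDimensional F V] {W L : Submodule F V}
    (h : W ⊓ L = ⊥) : finrank F ↥(W ⊔ L) = finrank F W + finrank F L := by
  have := finrank_sup_add_finrank_inf_eq W L
  rwa [h, finrank_bot, add_zero] at this

theorem inf_eq_bot_of_finrank_eq_one [FiniteDimensional F V] {W X : Submodule F V}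
    (hX : finrank F X = 1) (hXW : ¬X ≤ W) : W ⊓ X = ⊥ := by
  have hlt : W ⊓ X < X := inf_le_right.lt_of_ne fun h => hXW (inf_eq_right.mp h)
  have := finrank_lt_finrank_of_lt hlt
  exact finrank_eq_zero.mp (by omega)

theorem card_points_of_finrank_eq_two [Finite F] {C : Submodule F V}
    (hC : finrank F C = 2) :
    Nat.card {L : Submodule F V // L ≤ C ∧ finrank F L = 1} = Nat.card F + 1 := by
  calc Nat.card {L : Submodule F V // L ≤ C ∧ finrank F L = 1}
      = Nat.card {L : Submodule F C // finrank F L = 1} := by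
        refine Nat.card_congr ((Equiv.subtypeSubtypeEquivSubtypeInter _ _).symm.trans ?_)
        exact ((MapSubtype.orderIso C).toEquiv.subtypeEquiv fun L => by
          rw [← finrank_map_subtype_eq C L]; rfl).symm
    _ = Nat.card (Projectivization F C) :=
        Nat.card_congr (Projectivization.equivSubmodule F C).symm
    _ = Nat.card F + 1 := Projectivization.card_of_finrank_two F C hC

/-- For `W` of codimension 2 in `U`, the pencil of hyperplanes of `U` through `W`. -/
def pencil (W U : Submodule F V) : Set (Submodule F V) :=
  {H | W ≤ H ∧ H ≤ U ∧ finrank F H = finrank F W + 1}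

variable [FiniteDimensional F V] {W U C X H : Submodule F V}

def pencilEquivPoints (hCU : C ≤ U) (hWC : W ⊓ C = ⊥) (hWCU : W ⊔ C = U) :
    pencil W U ≃ {L : Submodule F V // L ≤ C ∧ finrank F L = 1} where
  toFun H := ⟨C ⊓ H, inf_le_left, by
    have hsup : W ⊔ C ⊓ H = H := by
      rw [← sup_inf_assoc_of_le C H.2.1, hWCU, inf_eq_right.mpr H.2.2.1]
    have := finrank_sup_of_inf_eq_bot (L := C ⊓ H)
      (le_bot_iff.mp ((inf_le_inf_left W inf_le_left).trans hWC.le))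
    rw [hsup, H.2.2.2] at this
    omega⟩
  invFun L := ⟨W ⊔ L, le_sup_left, sup_le (hWCU ▸ le_sup_left) (L.2.1.trans hCU), by
    rw [finrank_sup_of_inf_eq_bot (le_bot_iff.mp ((inf_le_inf_left W L.2.1).trans hWC.le)),
      L.2.2]⟩
  left_inv H := Subtype.ext <| by
    show W ⊔ C ⊓ H = H
    rw [← sup_inf_assoc_of_le C H.2.1, hWCU, inf_eq_right.mpr H.2.2.1]
  right_inv L := Subtype.ext <| by
    show C ⊓ (W ⊔ L) = L
    rw [inf_comm, sup_comm, sup_inf_assoc_of_le W L.2.1, hWC, sup_bot_eq]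

theorem card_pencil [Finite F] (hWU : W ≤ U) (hdim : finrank F W + 2 = finrank F U) :
    Nat.card (pencil W U) = Nat.card F + 1 := by
  obtain ⟨C, hCU, hWC, hWCU⟩ := exists_inf_eq_bot_sup_eq_of_le hWU
  have hC : finrank F C = 2 := by
    have := finrank_sup_of_inf_eq_bot hWC
    rw [hWCU] at this
    omega
  rw [Nat.card_congr (pencilEquivPoints hCU hWC hWCU), card_points_of_finrank_eq_two hC]

theorem sup_mem_pencil (hWU : W ≤ U) (hX : finrank F X = 1) (hXU : X ≤ U) (hXW : ¬X ≤ W) :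
    W ⊔ X ∈ pencil W U :=
  ⟨le_sup_left, sup_le hWU hXU, by
    rw [finrank_sup_of_inf_eq_bot (inf_eq_bot_of_finrank_eq_one hX hXW), hX]⟩

theorem eq_sup_of_mem_pencil (hH : H ∈ pencil W U) (hX : finrank F X = 1) (hXH : X ≤ H)
    (hXW : ¬X ≤ W) : H = W ⊔ X :=
  (eq_of_le_of_finrank_eq (sup_le hH.1 hXH) (by
    rw [finrank_sup_of_inf_eq_bot (inf_eq_bot_of_finrank_eq_one hX hXW), hX, hH.2.2])).symm

theorem exists_le_finrank_eq_add_one (h : finrank F U < finrank F V) :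
    ∃ U', U ≤ U' ∧ finrank F U' = finrank F U + 1 := by
  have hU : U ≠ ⊤ := fun hU => by rw [hU, finrank_top] at h; exact h.false
  obtain ⟨v, -, hv⟩ := SetLike.exists_of_lt (lt_top_iff_ne_top.mpr hU)
  exact ⟨U ⊔ span F {v}, le_sup_left, finrank_sup_span_singleton hv⟩

variable [Fintype F]

theorem card_eq_of_coe_eq_pencil {S : Finset (Submodule F V)} (hWU : W ≤ U)
    (hdim : finrank F W + 2 = finrank F U) (hS : (S : Set (Submodule F V)) = pencil W U) :
    S.card = Fintype.card F + 1 := by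
  have := card_pencil hWU hdim
  rwa [← hS, Nat.card_coe_set_eq, Set.ncard_coe_finset, Nat.card_eq_fintype_card] at this

theorem card_filter_le_of_coe_eq_pencil {S : Finset (Submodule F V)} (hWU : W ≤ U)
    (hdim : finrank F W + 2 = finrank F U) (hS : (S : Set (Submodule F V)) = pencil W U)
    (hX : finrank F X = 1) :
    {H ∈ S | X ≤ H}.card =
      Fintype.card F * (if X ≤ W then 1 else 0) + (if X ≤ U then 1 else 0) := by
  have hmem : ∀ {H}, H ∈ S ↔ H ∈ pencil W U := by simp [← hS]
  by_cases hXW : X ≤ W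
  · rw [Finset.filter_true_of_mem fun H hH => hXW.trans (hmem.mp hH).1,
      card_eq_of_coe_eq_pencil hWU hdim hS, if_pos hXW, if_pos (hXW.trans hWU), mul_one]
  by_cases hXU : X ≤ U
  · have : {H ∈ S | X ≤ H} = {W ⊔ X} := Finset.eq_singleton_iff_unique_mem.mpr
      ⟨Finset.mem_filter.mpr ⟨hmem.mpr (sup_mem_pencil hWU hX hXU hXW), le_sup_right⟩,
        fun H hH => eq_sup_of_mem_pencil (hmem.mp (Finset.mem_filter.mp hH).1) hX
          (Finset.mem_filter.mp hH).2 hXW⟩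
    simp [this, hXW, hXU]
  · rw [Finset.filter_false_of_mem fun H hH hXH => hXU (hXH.trans (hmem.mp hH).2.1)]
    simp [hXW, hXU]

theorem sum_countP_le_of_coe_eq_pencil {S : Finset (Submodule F V)} (hWU : W ≤ U)
    (hdim : finrank F W + 2 = finrank F U) (hS : (S : Set (Submodule F V)) = pencil W U)
    {P : Multiset (Submodule F V)} (hP : ∀ X ∈ P, finrank F X = 1) :
    ∑ H ∈ S, P.countP (· ≤ H) = Fintype.card F * P.countP (· ≤ W) + P.countP (· ≤ U) := by
  induction P using Multiset.induction_on with
  | empty => simp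
  | cons X P ih =>
    simp only [Multiset.countP_cons, Finset.sum_add_distrib, Finset.sum_boole, Nat.cast_id]
    rw [ih fun Y hY => hP Y (Multiset.mem_cons_of_mem hY),
      card_filter_le_of_coe_eq_pencil hWU hdim hS (hP X (Multiset.mem_cons_self X P))]
    ring

theorem countP_modEq_of_forall_mem_pencil {P : Multiset (Submodule F V)}
    (hP : ∀ X ∈ P, finrank F X = 1) (hWU : W ≤ U) (hdim : finrank F W + 2 = finrank F U) {n : ℕ}
    (hcong : ∀ H ∈ pencil W U,
      P.countP (· ≤ H) ≡ P.countP (· ≤ U) [MOD Fintype.card F ^ (n + 1)]) :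
    P.countP (· ≤ W) ≡ P.countP (· ≤ U) [MOD Fintype.card F ^ n] := by
  have : Finite V := Module.finite_of_finite F
  obtain ⟨S, hS⟩ := (pencil W U).toFinite.exists_finset_coe
  have hsum := Nat.ModEq.sum (s := S) fun H hH => hcong H (hS ▸ hH)
  rw [sum_countP_le_of_coe_eq_pencil hWU hdim hS hP, Finset.sum_const, smul_eq_mul,
    card_eq_of_coe_eq_pencil hWU hdim hS, add_one_mul, pow_succ'] at hsum
  exact Nat.ModEq.mul_left_cancel' Fintype.card_ne_zero (Nat.ModEq.add_right_cancel' _ hsum)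

end Submodule

/-- Restriction of a `q^r`-divisible multiset of points to a subspace `U` of codimension
`j ≤ r` is `q^(r-j)`-divisible as a multiset of points in `U`. -/
theorem restriction_divisible (F : Type) [Field F] [Fintype F] (V : Type) [AddCommGroup V]
    [Module F V] [FiniteDimensional F V] (r j : ℕ) (hjr : j ≤ r)
    (P : Multiset (Submodule F V)) (hP : IsDivisible F r P)
    (U : Submodule F V) (hU : Module.finrank F ↥U + j = Module.finrank F V)
    (W : Submodule F V) (hWU : W ≤ U)
    (hW : Module.finrank F ↥W + 1 = Module.finrank F ↥U) :
    Multiset.card (P.filter (fun X => X ≤ W)) ≡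
      Multiset.card (P.filter (fun X => X ≤ U)) [MOD (Fintype.card F) ^ (r - j)] := by
  simp only [← Multiset.countP_eq_card_filter]
  induction j generalizing U W with
  | zero =>
    obtain rfl : U = ⊤ := Submodule.eq_top_of_finrank_eq hU
    simpa [Multiset.countP_eq_card_filter] using hP.2 W (by rw [hW, finrank_top])
  | succ j ih =>
    obtain ⟨U', hUU', hU'⟩ :=
      Submodule.exists_le_finrank_eq_add_one (by omega : finrank F U < finrank F V)
    have hU'j : finrank F U' + j = finrank F V := by omega
    have hUU'cong := ih (by omega) U' hU'j U hUU' hU'.symm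
    have hWU'cong := Submodule.countP_modEq_of_forall_mem_pencil (n := r - (j + 1)) hP.1
      (hWU.trans hUU') (by omega) fun H hH => by
        rw [show r - (j + 1) + 1 = r - j by omega]
        exact ih (by omega) U' hU'j H hH.2.1 (by rw [hH.2.2]; omega)
    exact hWU'cong.trans (hUU'cong.of_dvd (pow_dvd_pow _ (by omega))).symm
end

section
/- For every prime power q, every r ∈ ℕ, and every i ∈ {0,…,r}, there exists a q^r-divisible multiset of points of cardinality s_q(r,i) := q^i·(q^{r−i+1}−1)/(q−1) = q^i + q^{i+1} + … + q^r; a realization is given by the q^i-fold repetition of all points of an (r−i+1)-dimensional subspace. -/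
/-!
An `(n+1)`-dimensional space has `1 + q + ⋯ + q^n` points and each of its hyperplanes has
`1 + q + ⋯ + q^(n-1)`, so the set of all its points is `q^n`-divisible. Repeating every point
`q^i` times multiplies both counts, and hence the modulus, by `q^i`; with `n = r - i` this gives
a `q^r`-divisible multiset of size `q^i + ⋯ + q^r`.
-/

open scoped Classical

open Module
open scoped LinearAlgebra.Projectivization

section Points

variable {F V : Type*} [Field F] [AddCommGroup V] [Module F V]

def pointsOf (W : Submodule F V) : Set (Submodule F V) :=
  {X | finrank F X = 1 ∧ X ≤ W}

noncomputable def pointsOfEquivProjectivization (W : Submodule F V) : pointsOf W ≃ ℙ F W where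
  toFun X := Projectivization.mk'' (X.1.comap W.subtype) <| by
    rw [← Submodule.finrank_map_subtype_eq, Submodule.map_comap_subtype,
      inf_eq_right.2 X.2.2, X.2.1]
  invFun p := ⟨p.submodule.map W.subtype, by
    rw [Submodule.finrank_map_subtype_eq, p.finrank_submodule], Submodule.map_subtype_le W _⟩
  left_inv X := Subtype.ext <| by
    simp only [Projectivization.submodule_mk'', Submodule.map_comap_subtype, inf_eq_right.2 X.2.2]
  right_inv p := by
    simp only [Submodule.comap_map_eq_of_injective W.injective_subtype,
      Projectivization.mk''_submodule]

theorem card_pointsOf [Finite F] (W : Submodule F V) :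
    Nat.card (pointsOf W) = ∑ j ∈ Finset.range (finrank F W), Nat.card F ^ j := by
  rw [Nat.card_congr (pointsOfEquivProjectivization W), Projectivization.card_of_finrank F W rfl]

variable [Finite V]

noncomputable def pointsFinset (W : Submodule F V) : Finset (Submodule F V) :=
  (pointsOf W).toFinite.toFinset

theorem mem_pointsFinset {W X : Submodule F V} :
    X ∈ pointsFinset W ↔ finrank F X = 1 ∧ X ≤ W := by
  simp [pointsFinset, pointsOf]

theorem card_pointsFinset [Finite F] (W : Submodule F V) :
    (pointsFinset W).card = ∑ j ∈ Finset.range (finrank F W), Nat.card F ^ j := by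
  rw [pointsFinset, ← Set.ncard_eq_toFinset_card, ← Nat.card_coe_set_eq, card_pointsOf]

theorem filter_pointsFinset_le (W H : Submodule F V) :
    (pointsFinset W).filter (· ≤ H) = pointsFinset (W ⊓ H) := by
  ext X
  simp [mem_pointsFinset, and_assoc]

end Points

section Divisible

variable {F : Type} [Field F] [Fintype F] {V : Type} [AddCommGroup V] [Module F V]

theorem isDivisible_pointsFinset_top [Finite V] {n : ℕ} (hV : finrank F V = n + 1) :
    IsDivisible F n (pointsFinset (⊤ : Submodule F V)).val := by
  refine ⟨fun X hX => (mem_pointsFinset.1 hX).1, fun H hH => ?_⟩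
  have hHn : finrank F H = n := by omega
  rw [← Finset.filter_val, Finset.card_val, Finset.card_val, filter_pointsFinset_le, top_inf_eq,
    card_pointsFinset, card_pointsFinset, finrank_top, hV, hHn, Finset.sum_range_succ,
    Nat.card_eq_fintype_card]
  exact Nat.add_modEq_right.symm

theorem IsDivisible.pow_nsmul {r : ℕ} {P : Multiset (Submodule F V)} (hP : IsDivisible F r P)
    (i : ℕ) : IsDivisible F (i + r) (Fintype.card F ^ i • P) := by
  refine ⟨fun X hX => hP.1 X (Multiset.mem_of_mem_nsmul hX), fun H hH => ?_⟩
  rw [Multiset.filter_nsmul, Multiset.card_nsmul, Multiset.card_nsmul, pow_add]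
  exact (hP.2 H hH).mul_left' _

end Divisible

/-- For `0 ≤ i ≤ r` there exists a `q^r`-divisible multiset of points of cardinality
`s_q(r,i) = q^i + q^(i+1) + … + q^r`. -/
theorem exists_divisible_of_card_s (F : Type) [Field F] [Fintype F] (r i : ℕ) (hi : i ≤ r) :
    ∃ (m : ℕ) (P : Multiset (Submodule F (Fin m → F))),
      IsDivisible F r P ∧
        Multiset.card P = ∑ j ∈ Finset.Icc i r, (Fintype.card F) ^ j := by
  obtain ⟨n, rfl⟩ := Nat.exists_eq_add_of_le hi
  refine ⟨n + 1, Fintype.card F ^ i • (pointsFinset ⊤).val,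
    (isDivisible_pointsFinset_top (finrank_fin_fun F)).pow_nsmul i, ?_⟩
  rw [Multiset.card_nsmul, Finset.card_val, card_pointsFinset, finrank_top, finrank_fin_fun,
    Nat.card_eq_fintype_card, Finset.mul_sum, ← Finset.Ico_add_one_right_eq_Icc,
    Finset.sum_Ico_eq_sum_range, add_assoc, Nat.add_sub_cancel_left, add_comm n]
  simp only [pow_add]
end

section
/- Let q ≥ 2 be an integer, r ∈ ℕ, and define s_q(r,i) = (q^{r+1}−q^i)/(q−1) for 0 ≤ i ≤ r. Every integer n admits a unique representation n = Σ_{i=0}^{r} a_i·s_q(r,i) with a_0,…,a_{r−1} ∈ {0,1,…,q−1} and a_r ∈ ℤ. -/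
/-! Peeling off the last digit: since `s_q(r+1,0) = 1 + q·s_q(r,0)` and `s_q(r+1,i+1) = q·s_q(r,i)`,
an expansion of `n` of length `r + 2` is `n = a₀ + q·(a₀·s_q(r,0) + m)` with `m` the value of an
expansion of length `r + 1`. Division with remainder by `q` forces `a₀ = n % q`, and then the
remaining digits form an expansion of `n / q - a₀·s_q(r,0)`, so induction on `r` applies. -/

open Finset

section GeomSum

variable {R : Type*} [CommSemiring R] (x : R)

lemma sum_Icc_add_one_pow (i r : ℕ) :
    ∑ j ∈ Icc (i + 1) (r + 1), x ^ j = x * ∑ j ∈ Icc i r, x ^ j := by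
  rw [← map_add_right_Icc, sum_map, mul_sum]
  simp only [addRightEmbedding_apply, pow_succ, mul_comm]

lemma sum_Icc_zero_pow_succ (r : ℕ) :
    ∑ j ∈ Icc 0 (r + 1), x ^ j = 1 + x * ∑ j ∈ Icc 0 r, x ^ j := by
  rw [← add_sum_Ioc_eq_sum_Icc (Nat.zero_le (r + 1)), ← Icc_add_one_left_eq_Ioc,
    sum_Icc_add_one_pow, pow_zero]

end GeomSum

namespace SqrAdic

variable (q : ℕ)

def value (r : ℕ) (a : Fin (r + 1) → ℤ) : ℤ :=
  ∑ i : Fin (r + 1), a i * ∑ j ∈ Icc (i : ℕ) r, (q : ℤ) ^ j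

lemma value_succ (r : ℕ) (a : Fin (r + 2) → ℤ) :
    value q (r + 1) a
      = a 0 + q * (a 0 * ∑ j ∈ Icc 0 r, (q : ℤ) ^ j + value q r (Fin.tail a)) := by
  have hshift (i : Fin (r + 1)) : a i.succ * ∑ j ∈ Icc ((i : ℕ) + 1) (r + 1), (q : ℤ) ^ j
      = q * (Fin.tail a i * ∑ j ∈ Icc (i : ℕ) r, (q : ℤ) ^ j) := by
    rw [sum_Icc_add_one_pow, Fin.tail]
    ring
  rw [value, Fin.sum_univ_succ]
  simp only [Fin.val_zero, Fin.val_succ, hshift, sum_Icc_zero_pow_succ, value, ← mul_sum]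
  ring

def IsExpansion (r : ℕ) (n : ℤ) (a : Fin (r + 1) → ℤ) : Prop :=
  (∀ i : Fin (r + 1), (i : ℕ) < r → 0 ≤ a i ∧ a i ≤ (q : ℤ) - 1) ∧ n = value q r a

lemma isExpansion_zero_iff (n : ℤ) (a : Fin 1 → ℤ) : IsExpansion q 0 n a ↔ a 0 = n := by
  simp [IsExpansion, value, eq_comm]

lemma isExpansion_succ_iff (hq : 0 < q) (r : ℕ) (n : ℤ) (a : Fin (r + 2) → ℤ) :
    IsExpansion q (r + 1) n a ↔
      a 0 = n % q ∧
        IsExpansion q r (n / q - n % q * ∑ j ∈ Icc 0 r, (q : ℤ) ^ j) (Fin.tail a) := by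
  have hdigits : (∀ i : Fin (r + 2), (i : ℕ) < r + 1 → 0 ≤ a i ∧ a i ≤ (q : ℤ) - 1) ↔
      (0 ≤ a 0 ∧ a 0 < q) ∧
        ∀ i : Fin (r + 1), (i : ℕ) < r → 0 ≤ Fin.tail a i ∧ Fin.tail a i ≤ (q : ℤ) - 1 := by
    simp only [Fin.forall_fin_succ, Fin.val_zero, Fin.val_succ, Fin.tail, Int.lt_iff_add_one_le,
      ← le_sub_iff_add_le, add_lt_add_iff_right, r.succ_pos, true_imp_iff]
  have hdiv := Int.ediv_emod_unique (a := n) (r := a 0)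
    (q := a 0 * ∑ j ∈ Icc 0 r, (q : ℤ) ^ j + value q r (Fin.tail a)) (Int.natCast_pos.mpr hq)
  rw [IsExpansion, IsExpansion, hdigits, value_succ]
  constructor
  · rintro ⟨⟨⟨hlo, hhi⟩, htail⟩, hn⟩
    obtain ⟨hquot, hrem⟩ := hdiv.mpr ⟨hn.symm, hlo, hhi⟩
    exact ⟨hrem.symm, htail, by rw [hquot, hrem]; ring⟩
  · rintro ⟨hrem, htail, hm⟩
    obtain ⟨hn, hlo, hhi⟩ := hdiv.mp ⟨by rw [← hm, hrem]; ring, hrem.symm⟩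
    exact ⟨⟨⟨hlo, hhi⟩, htail⟩, hn.symm⟩

end SqrAdic

lemma Fin.existsUnique_cons {α : Type*} {n : ℕ} {P : (Fin n → α) → Prop} (x : α)
    (h : ∃! b, P b) : ∃! a : Fin (n + 1) → α, a 0 = x ∧ P (Fin.tail a) := by
  obtain ⟨b, hb, hbu⟩ := h
  refine ⟨Fin.cons x b, ⟨rfl, by rwa [Fin.tail_cons]⟩, ?_⟩
  rintro a ⟨ha0, ha⟩
  rw [← Fin.cons_self_tail a, ha0, hbu _ ha]

/-- For `q ≥ 2` every integer `n` has a unique representation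
`n = Σ_{i=0}^r a_i · s_q(r,i)` with `a_0, …, a_(r-1) ∈ {0, …, q-1}` and `a_r ∈ ℤ`,
where `s_q(r,i) = q^i + … + q^r`. (The `S_q(r)`-adic expansion.) -/
theorem sqr_adic_expansion_existsUnique (q : ℕ) (hq : 2 ≤ q) (r : ℕ) (n : ℤ) :
    ∃! a : Fin (r + 1) → ℤ,
      (∀ i : Fin (r + 1), (i : ℕ) < r → 0 ≤ a i ∧ a i ≤ (q : ℤ) - 1) ∧
      n = ∑ i : Fin (r + 1), a i * ∑ j ∈ Finset.Icc (i : ℕ) r, (q : ℤ) ^ j := by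
  show ∃! a, SqrAdic.IsExpansion q r n a
  induction r generalizing n with
  | zero =>
    simp only [SqrAdic.isExpansion_zero_iff]
    exact ⟨fun _ => n, rfl, fun a ha => funext fun i => by rwa [Fin.fin_one_eq_zero i]⟩
  | succ r ih =>
    simp only [SqrAdic.isExpansion_succ_iff q (by omega)]
    exact Fin.existsUnique_cons _ (ih _)
end

section
/- Let P be a non-empty finite multiset of points (1-dimensional subspaces) in a finite-dimensional F_q-vector space V with dim V ≥ 2. Then there exists a hyperplane H of V with #(P∩H) < #P / q. -/
/-!
Double count the pairs `(X, φ)` with `X ∈ P` and `φ` a linear functional on `V` vanishing on `X`.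
A point lies in the kernel of exactly `q ^ (n - 1)` functionals (its dual annihilator), so there
are `#P q ^ (n - 1)` such pairs. If every hyperplane contained at least `#P / q` points of `P`,
then, since the kernels of the `q ^ n - 1` nonzero functionals are hyperplanes and the zero
functional accounts for all of `#P`, there would be at least
`#P + (q ^ n - 1) #P / q > #P q ^ (n - 1)` pairs.
-/

open scoped Classical

open Module Finset

theorem Multiset.sum_card_filter_eq_sum_map_card_filter {α β : Type*} (P : Multiset α)
    (S : Finset β) (r : α → β → Prop) :
    ∑ b ∈ S, card (P.filter (r · b)) = (P.map fun a => #(S.filter (r a))).sum := by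
  induction P using Multiset.induction_on with
  | empty => simp
  | cons a P ih =>
    simp only [Multiset.filter_cons, Multiset.card_add, Multiset.map_cons, Multiset.sum_cons,
      sum_add_distrib, ih, apply_ite card, Multiset.card_singleton, Multiset.card_zero,
      card_filter]

section

variable {F V : Type*} [Field F] [AddCommGroup V] [Module F V] [FiniteDimensional F V]

theorem Submodule.natCard_dualAnnihilator_mul_pow_finrank (W : Submodule F V) :
    Nat.card W.dualAnnihilator * Nat.card F ^ finrank F W = Nat.card F ^ finrank F V := by
  rw [natCard_eq_pow_finrank (K := F), ← pow_add, add_comm,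
    Subspace.finrank_add_finrank_dualAnnihilator_eq]

variable [Fintype (Dual F V)]

theorem sum_card_filter_le_ker_mul_pow_finrank {P : Multiset (Submodule F V)} {k : ℕ}
    (hP : ∀ X ∈ P, finrank F X = k) :
    (∑ φ : Dual F V, Multiset.card (P.filter (· ≤ LinearMap.ker φ))) * Nat.card F ^ k =
      Multiset.card P * Nat.card F ^ finrank F V := by
  have hcount : ∀ X ∈ P, #{φ : Dual F V | X ≤ LinearMap.ker φ} * Nat.card F ^ k =
      Nat.card F ^ finrank F V := by
    intro X hX
    have : #{φ : Dual F V | X ≤ LinearMap.ker φ} = Nat.card X.dualAnnihilator := by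
      rw [Nat.card_eq_fintype_card, Fintype.card_subtype]
      congr! 2 with φ
      rw [Submodule.mem_dualAnnihilator, SetLike.le_def]
      rfl
    rw [this, ← hP X hX, Submodule.natCard_dualAnnihilator_mul_pow_finrank]
  rw [Multiset.sum_card_filter_eq_sum_map_card_filter, ← Multiset.sum_map_mul_right,
    Multiset.map_congr rfl hcount, Multiset.map_const', Multiset.sum_replicate, smul_eq_mul]

-- `#P` is added on both sides to avoid truncated subtraction: besides `φ = 0`, which
-- contributes `#P`, there are `q ^ n - 1` functionals, each contributing at least `#P / q`.
theorem card_mul_add_le_sum_card_filter_le_ker (P : Multiset (Submodule F V))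
    (hP : ∀ H : Submodule F V, finrank F H + 1 = finrank F V →
      Multiset.card P ≤ Multiset.card (P.filter (· ≤ H)) * Nat.card F) :
    Multiset.card P * Nat.card F + Multiset.card P * Nat.card F ^ finrank F V ≤
      (∑ φ : Dual F V, Multiset.card (P.filter (· ≤ LinearMap.ker φ))) * Nat.card F +
        Multiset.card P := by
  set N : Dual F V → ℕ := fun φ => Multiset.card (P.filter (· ≤ LinearMap.ker φ))
  have hN0 : N 0 = Multiset.card P := by simp [N]
  have hnonzero : #(univ.erase (0 : Dual F V)) + 1 = Nat.card F ^ finrank F V := by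
    rw [card_erase_add_one (mem_univ _), card_univ, ← Nat.card_eq_fintype_card,
      natCard_eq_pow_finrank (K := F), Subspace.dual_finrank_eq]
  calc Multiset.card P * Nat.card F + Multiset.card P * Nat.card F ^ finrank F V
      = Multiset.card P * Nat.card F + ∑ _φ ∈ univ.erase (0 : Dual F V), Multiset.card P +
          Multiset.card P := by
        rw [sum_const, smul_eq_mul, ← hnonzero]; ring
    _ ≤ N 0 * Nat.card F + ∑ φ ∈ univ.erase 0, N φ * Nat.card F + Multiset.card P := by
        rw [hN0]
        gcongr with φ hφ
        exact hP _ (Dual.finrank_ker_add_one_of_ne_zero (ne_of_mem_erase hφ))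
    _ = (∑ φ, N φ) * Nat.card F + Multiset.card P := by
        rw [sum_mul, ← add_sum_erase univ (fun φ => N φ * Nat.card F) (mem_univ 0)]

end

theorem exists_hyperplane_few_points_general (F : Type) [Field F] [Fintype F] (V : Type)
    [AddCommGroup V] [Module F V] [FiniteDimensional F V]
    (P : Multiset (Submodule F V)) (hpts : ∀ X ∈ P, Module.finrank F ↥X = 1)
    (hne : P ≠ 0) :
    ∃ H : Submodule F V, Module.finrank F ↥H + 1 = Module.finrank F V ∧
      Multiset.card (P.filter (fun X => X ≤ H)) * Fintype.card F < Multiset.card P := by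
  by_contra! hcon
  simp only [← Nat.card_eq_fintype_card] at hcon
  have : Finite (Dual F V) := Module.finite_of_finite F
  have : Fintype (Dual F V) := Fintype.ofFinite _
  have htotal := sum_card_filter_le_ker_mul_pow_finrank hpts
  have hlower := card_mul_add_le_sum_card_filter_le_ker P hcon
  have hP : 0 < Multiset.card P := Multiset.card_pos.mpr hne
  have hq : 1 < Nat.card F := Finite.one_lt_card
  rw [pow_one] at htotal
  nlinarith

/-- For a non-empty multiset `P` of points in a vector space of dimension at least 2,
there is a hyperplane `H` with `#(P ∩ H) < #P / q`. -/
theorem exists_hyperplane_few_points (F : Type) [Field F] [Fintype F] (V : Type)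
    [AddCommGroup V] [Module F V] [FiniteDimensional F V]
    (h2 : 2 ≤ Module.finrank F V)
    (P : Multiset (Submodule F V)) (hpts : ∀ X ∈ P, Module.finrank F ↥X = 1)
    (hne : P ≠ 0) :
    ∃ H : Submodule F V, Module.finrank F ↥H + 1 = Module.finrank F V ∧
      Multiset.card (P.filter (fun X => X ≤ H)) * Fintype.card F < Multiset.card P :=
  exists_hyperplane_few_points_general F V P hpts hne
end

section
/- Let q ≥ 2 and r ≥ 1 be integers, and s_q(r,i) = q^i + … + q^r. If n = Σ_{i=0}^{r} a_i·s_q(r,i) is the S_q(r)-adic expansion of n and m = n − τ·q^r for some τ ∈ ℤ, then the S_q(r−1)-adic expansion of m is m = Σ_{i=0}^{r−2} a_i·s_q(r−1,i) + (a_{r−1} + q(σ − τ))·q^{r−1}, where σ = Σ_{i=0}^{r} a_i. In particular the leading coefficient of m's S_q(r−1)-adic expansion equals a_{r−1} + q(σ − τ). -/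
/-!
Since `s_q(r,i) = s_q(r-1,i) + q^r`, the expansion of `n` equals
`Σ_{i<r} a_i s_q(r-1,i) + σ q^r`; subtracting `τ q^r` and using `s_q(r-1,r-1) = q^(r-1)`
gives the claimed expansion of `m`. It is the only one: `s_q(k,0) ≡ 1` and `s_q(k,i) ≡ 0`
modulo `q` for `i > 0`, so the lowest coefficient of a difference of two expansions is a
multiple of `q` of absolute value below `q`, hence zero, and dividing by `q` reduces to `k - 1`.
-/

open Finset

/-- `s_q(k,i) = q^i + ⋯ + q^k`, which is `0` when `k < i`. -/
def sWeight (q k i : ℕ) : ℤ := ∑ j ∈ Icc i k, (q : ℤ) ^ j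

/-- `Σ d_i s_q(k,i)`: an `S_q(k)`-adic expansion when `d_0, …, d_{k-1}` lie in `[0, q)`. -/
def sExpansion (q k : ℕ) (d : Fin (k + 1) → ℤ) : ℤ := ∑ i, d i * sWeight q k i

section sWeight

variable (q : ℕ) {k i : ℕ}

@[simp] lemma sWeight_self : sWeight q k k = (q : ℤ) ^ k := by simp [sWeight]

lemma sWeight_of_lt (h : k < i) : sWeight q k i = 0 := by
  simp [sWeight, Icc_eq_empty_of_lt h]

lemma sWeight_succ_top (h : i ≤ k + 1) :
    sWeight q (k + 1) i = sWeight q k i + (q : ℤ) ^ (k + 1) :=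
  sum_Icc_succ_top h _

lemma sWeight_succ_succ : sWeight q (k + 1) (i + 1) = q * sWeight q k i := by
  rw [sWeight, sWeight, ← map_add_right_Icc, sum_map, mul_sum]
  simp [pow_succ, mul_comm]

lemma sWeight_zero_succ : sWeight q (k + 1) 0 = 1 + q * sWeight q k 0 := by
  rw [← sWeight_succ_succ, sWeight, sWeight, ← insert_Icc_add_one_left_eq_Icc (Nat.zero_le _),
    sum_insert (by simp), pow_zero]

end sWeight

section sExpansion

variable {q k : ℕ}

lemma sExpansion_sub (b c : Fin (k + 1) → ℤ) :
    sExpansion q k (b - c) = sExpansion q k b - sExpansion q k c := by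
  simp only [sExpansion, Pi.sub_apply, sub_mul, sum_sub_distrib]

lemma sExpansion_eq_sum_castSucc_add_last (d : Fin (k + 1) → ℤ) :
    sExpansion q k d =
      ∑ i : Fin k, d i.castSucc * sWeight q k i + d (Fin.last k) * (q : ℤ) ^ k := by
  rw [sExpansion, Fin.sum_univ_castSucc]
  simp

lemma sExpansion_succ_eq_castSucc (d : Fin (k + 2) → ℤ) :
    sExpansion q (k + 1) d =
      sExpansion q k (fun i ↦ d i.castSucc) + (∑ i, d i) * (q : ℤ) ^ (k + 1) := by
  simp only [sExpansion, fun i : Fin (k + 2) ↦ sWeight_succ_top q (Nat.lt_succ_iff.mp i.isLt),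
    mul_add, sum_add_distrib, sum_mul]
  rw [Fin.sum_univ_castSucc (fun i ↦ d i * sWeight q k i)]
  simp [sWeight_of_lt]

lemma sExpansion_succ_eq_tail (d : Fin (k + 2) → ℤ) :
    sExpansion q (k + 1) d = d 0 + q * (d 0 * sWeight q k 0 + sExpansion q k (Fin.tail d)) := by
  simp only [sExpansion, Fin.sum_univ_succ, Fin.val_zero, Fin.val_succ, sWeight_zero_succ,
    sWeight_succ_succ, Fin.tail, mul_add, mul_sum, mul_left_comm (q : ℤ)]
  ring

lemma eq_zero_of_sExpansion_eq_zero {d : Fin (k + 1) → ℤ}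
    (hd : ∀ i : Fin (k + 1), (i : ℕ) < k → |d i| < q) (h : sExpansion q k d = 0) : d = 0 := by
  induction k with
  | zero =>
    funext i
    fin_cases i
    simpa [sExpansion] using h
  | succ k ih =>
    rw [sExpansion_succ_eq_tail] at h
    have hd0 : |d 0| < q := hd 0 k.succ_pos
    have hq : q ≠ 0 := by have := abs_nonneg (d 0); omega
    have head : d 0 = 0 := Int.eq_zero_of_abs_lt_dvd
      (by rw [eq_neg_of_add_eq_zero_left h]; exact (dvd_mul_right _ _).neg_right) hd0
    have tail : Fin.tail d = 0 := by
      refine ih (fun i hi ↦ hd i.succ (by simpa using hi)) ?_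
      simpa [head, hq] using h
    rw [← Fin.cons_self_tail d, head, tail]
    exact Matrix.cons_zero_zero

lemma eq_of_sExpansion_eq {b c : Fin (k + 1) → ℤ}
    (hb : ∀ i : Fin (k + 1), (i : ℕ) < k → 0 ≤ b i ∧ b i ≤ (q : ℤ) - 1)
    (hc : ∀ i : Fin (k + 1), (i : ℕ) < k → 0 ≤ c i ∧ c i ≤ (q : ℤ) - 1)
    (h : sExpansion q k b = sExpansion q k c) : b = c := by
  refine sub_eq_zero.mp (eq_zero_of_sExpansion_eq_zero (q := q) (fun i hi ↦ ?_) ?_)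
  · have := hb i hi; have := hc i hi
    rw [Pi.sub_apply, abs_lt]; constructor <;> linarith
  · rw [sExpansion_sub, h, sub_self]

end sExpansion

/-- If `n = Σ a_i s_q(r,i)` is the `S_q(r)`-adic expansion of `n` with cross sum `σ` and
`m = n - τ q^r`, then `m = Σ_{i≤r-2} a_i s_q(r-1,i) + (a_{r-1} + q(σ - τ)) q^(r-1)`, and this is
the `S_q(r-1)`-adic expansion of `m`: any expansion of `m` has leading coefficient
`a_{r-1} + q(σ - τ)`. -/
theorem expansion_restriction (q : ℕ) (r : ℕ) (hr : 1 ≤ r) (n τ : ℤ)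
    (a : Fin (r + 1) → ℤ)
    (ha : ∀ i : Fin (r + 1), (i : ℕ) < r → 0 ≤ a i ∧ a i ≤ (q : ℤ) - 1)
    (hn : n = ∑ i : Fin (r + 1), a i * ∑ j ∈ Finset.Icc (i : ℕ) r, (q : ℤ) ^ j)
    (m : ℤ) (hm : m = n - τ * (q : ℤ) ^ r) :
    (m = (∑ i : Fin (r - 1),
          a ⟨(i : ℕ), lt_of_lt_of_le i.isLt (by omega)⟩ *
            ∑ j ∈ Finset.Icc (i : ℕ) (r - 1), (q : ℤ) ^ j) +
        (a ⟨r - 1, by omega⟩ + (q : ℤ) * ((∑ i : Fin (r + 1), a i) - τ)) * (q : ℤ) ^ (r - 1)) ∧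
    ∀ b : Fin r → ℤ, (∀ i : Fin r, (i : ℕ) < r - 1 → 0 ≤ b i ∧ b i ≤ (q : ℤ) - 1) →
      m = ∑ i : Fin r, b i * ∑ j ∈ Finset.Icc (i : ℕ) (r - 1), (q : ℤ) ^ j →
      b ⟨r - 1, by omega⟩ = a ⟨r - 1, by omega⟩ + (q : ℤ) * ((∑ i : Fin (r + 1), a i) - τ) := by
  obtain ⟨k, rfl⟩ : ∃ k, r = k + 1 := ⟨r - 1, by omega⟩
  simp only [Nat.add_sub_cancel]
  set lead := a (Fin.last k).castSucc + q * ((∑ i, a i) - τ)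
  have restricted : m = ∑ i : Fin k, a i.castSucc.castSucc * sWeight q k i + lead * q ^ k := by
    rw [hm, show n = sExpansion q (k + 1) a from hn, sExpansion_succ_eq_castSucc,
      sExpansion_eq_sum_castSucc_add_last]
    ring
  refine ⟨restricted, fun b hb hmb ↦ ?_⟩
  let c : Fin (k + 1) → ℤ := Fin.snoc (fun i : Fin k ↦ a i.castSucc.castSucc) lead
  have hc : ∀ i : Fin (k + 1), (i : ℕ) < k → 0 ≤ c i ∧ c i ≤ (q : ℤ) - 1 := by
    intro i hi
    simpa [c, Fin.snoc, hi] using ha _ (by simp; omega)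
  have hbc : b = c := by
    refine eq_of_sExpansion_eq hb hc (hmb.symm.trans (restricted.trans ?_))
    simp [sExpansion_eq_sum_castSucc_add_last, c]
  exact (congrFun hbc (Fin.last k)).trans (Fin.snoc_last ..)
end

section
/- For every prime power q and every r ∈ ℕ, the largest integer that is not the cardinality of any q^r-divisible multiset of points over F_q equals r·q^{r+1} − (q^{r+1}−1)/(q−1). In particular, for every integer n > r·q^{r+1} − (q^{r+1}−1)/(q−1) there exists a q^r-divisible multiset of points of cardinality n. -/
open scoped Classical

/-!
Write `q = #F` and `s(r, i) = q ^ i + ⋯ + q ^ r`. Every integer has a unique expansion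
`n = a₀ s(r, 0) + ⋯ + a_{r-1} s(r, r-1) + a_r q ^ r` with digits `0 ≤ aᵢ < q` for `i < r`.
All points of an `(r - i + 1)`-dimensional subspace, each taken `q ^ i` times, form a
`q ^ r`-divisible multiset of size `s(r, i)`, so every `n` with `a_r ≥ 0` is realizable.
Conversely, averaging over the hyperplanes of a `q ^ (r + 1)`-divisible `P` gives one, `H`, with
`q · #(P ∩ H) ≤ #P`; as `P ∩ H` is `q ^ r`-divisible inside `H`, induction and a digit computation
show that the leading coefficient of `#P` is non-negative. The number `r q ^ (r + 1) - s(r, 0)` has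
all digits `q - 1` and leading coefficient `-1`, and every larger integer has `a_r ≥ 0`.
-/

open Module Finset

namespace SAdic

variable (q : ℤ)

/- The base numbers `s_q(r, i)`; `expand q a t` is the integer with `S_q(r)`-adic digits `a` and
leading coefficient `t`, and `lead q r n` computes that coefficient by peeling off the lowest digit
`n % q`, using `q * s(r, i) = s(r + 1, i + 1)`. -/
def base (r i : ℕ) : ℤ := ∑ j ∈ Ico i (r + 1), q ^ j

def expand {r : ℕ} (a : Fin r → ℤ) (t : ℤ) : ℤ := ∑ i, a i * base q r i + t * q ^ r

def lead : ℕ → ℤ → ℤ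
  | 0, n => n
  | r + 1, n => lead r ((n - n % q * base q (r + 1) 0) / q)

variable {q}

lemma base_self (r : ℕ) : base q r r = q ^ r := by
  rw [base, Nat.Ico_succ_singleton, sum_singleton]

lemma base_zero (r : ℕ) : base q r 0 = ∑ j ∈ range (r + 1), q ^ j := by
  rw [base, range_eq_Ico]

lemma base_nonneg (hq : 0 ≤ q) (r i : ℕ) : 0 ≤ base q r i :=
  sum_nonneg fun _ _ => pow_nonneg hq _

lemma mul_base (r i : ℕ) : q * base q r i = base q (r + 1) (i + 1) := by
  rw [base, base, mul_sum, ← sum_Ico_add']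
  exact sum_congr rfl fun j _ => (pow_succ' q j).symm

lemma base_succ_left {r i : ℕ} (h : i ≤ r) : base q (r + 1) i = q ^ i + q * base q r i := by
  rw [mul_base, base, sum_eq_sum_Ico_succ_bot (by omega)]
  rfl

lemma base_succ_right {r i : ℕ} (h : i ≤ r + 1) : base q (r + 1) i = base q r i + q ^ (r + 1) :=
  sum_Ico_succ_top h _

lemma base_mul_sub_one {r i : ℕ} (h : i ≤ r) : base q r i * (q - 1) = q ^ (r + 1) - q ^ i :=
  geom_sum_Ico_mul q (by omega)

lemma base_succ_zero (r : ℕ) : base q (r + 1) 0 = 1 + q * base q r 0 := by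
  rw [base_succ_left (Nat.zero_le r), pow_zero]

lemma expand_succ {r : ℕ} (a : Fin (r + 1) → ℤ) (t : ℤ) :
    expand q a t = a 0 + q * (a 0 * base q r 0 + expand q (Fin.tail a) t) := by
  simp only [expand, Fin.sum_univ_succ, Fin.val_zero, Fin.val_succ, ← mul_base,
    base_succ_left (Nat.zero_le r), Fin.tail]
  simp only [mul_left_comm (a _) q, ← mul_sum]
  ring

lemma lead_succ (hq : q ≠ 0) (r : ℕ) (n : ℤ) :
    lead q (r + 1) n = lead q r (n / q - n % q * base q r 0) := by
  have h : n - n % q * base q (r + 1) 0 = q * (n / q - n % q * base q r 0) := by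
    rw [base_succ_zero]
    linear_combination -Int.emod_add_mul_ediv n q
  rw [lead, h, Int.mul_ediv_cancel_left _ hq]

lemma lead_expand (hq : 0 < q) {r : ℕ} {a : Fin r → ℤ} (ha : ∀ i, a i ∈ Set.Ico 0 q) (t : ℤ) :
    lead q r (expand q a t) = t := by
  induction r with
  | zero => simp [lead, expand]
  | succ r ih =>
    have hmod : expand q a t % q = a 0 := by
      rw [expand_succ, Int.add_mul_emod_self_left, Int.emod_eq_of_lt (ha 0).1 (ha 0).2]
    have hdiv : expand q a t / q = a 0 * base q r 0 + expand q (Fin.tail a) t := by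
      rw [expand_succ, Int.add_mul_ediv_left _ _ hq.ne', Int.ediv_eq_zero_of_lt (ha 0).1 (ha 0).2,
        zero_add]
    rw [lead_succ hq.ne', hmod, hdiv, add_sub_cancel_left]
    exact ih (fun i => ha i.succ)

lemma exists_expand_lead (hq : 0 < q) (r : ℕ) (n : ℤ) :
    ∃ a : Fin r → ℤ, (∀ i, a i ∈ Set.Ico 0 q) ∧ expand q a (lead q r n) = n := by
  induction r generalizing n with
  | zero => exact ⟨Fin.elim0, fun i => i.elim0, by simp [lead, expand]⟩
  | succ r ih =>
    obtain ⟨a, ha, hexp⟩ := ih (n / q - n % q * base q r 0)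
    refine ⟨Fin.cons (n % q) a, Fin.forall_fin_succ.mpr ⟨?_, by simpa using ha⟩, ?_⟩
    · exact ⟨Int.emod_nonneg n hq.ne', Int.emod_lt_of_pos n hq⟩
    · rw [lead_succ hq.ne', expand_succ, Fin.tail_cons, hexp, Fin.cons_zero]
      linear_combination Int.emod_add_mul_ediv n q

lemma lead_zero (hq : 0 < q) (r : ℕ) : lead q r 0 = 0 := by
  simpa [expand] using lead_expand hq (a := fun _ : Fin r => 0) (fun _ => ⟨le_rfl, hq⟩) 0

lemma expand_eq_add (r : ℕ) (a : Fin r → ℤ) (t : ℤ) : expand q a t = expand q a 0 + t * q ^ r := by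
  simp [expand]

lemma expand_le_expand (hq : 0 ≤ q) {r : ℕ} {a a' : Fin r → ℤ} {t t' : ℤ} (ha : ∀ i, a i ≤ a' i)
    (ht : t ≤ t') : expand q a t ≤ expand q a' t' :=
  add_le_add (sum_le_sum fun i _ => mul_le_mul_of_nonneg_right (ha i) (base_nonneg hq _ _))
    (mul_le_mul_of_nonneg_right ht (pow_nonneg hq _))

lemma expand_succ_eq_expand_init {r : ℕ} (a : Fin (r + 1) → ℤ) (t : ℤ) :
    expand q a t = expand q (Fin.init a) (a (Fin.last r)) + (∑ i, a i + t) * q ^ (r + 1) := by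
  have h (i : Fin (r + 1)) : a i * base q (r + 1) i = a i * base q r i + a i * q ^ (r + 1) := by
    rw [base_succ_right (by omega), mul_add]
  simp only [expand, h, sum_add_distrib, ← sum_mul,
    Fin.sum_univ_castSucc (fun i => a i * base q r i), Fin.init, Fin.val_castSucc, Fin.val_last,
    base_self]
  ring

lemma expand_succ_eq_sum_add {r : ℕ} (a : Fin (r + 1) → ℤ) (t : ℤ) :
    expand q a t = ∑ i, a i * q ^ (i : ℕ) + q * expand q (Fin.init a) (a (Fin.last r)) +
      t * q ^ (r + 1) := by
  have h (i : Fin (r + 1)) :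
      a i * base q (r + 1) i = a i * q ^ (i : ℕ) + q * (a i * base q r i) := by
    rw [base_succ_left (by omega)]
    ring
  simp only [expand, h, sum_add_distrib, ← mul_sum,
    Fin.sum_univ_castSucc (fun i => a i * base q r i), Fin.init, Fin.val_castSucc, Fin.val_last,
    base_self]

lemma sum_digits_mul_pow_lt (hq : 0 < q) {r : ℕ} {a : Fin r → ℤ} (ha : ∀ i, a i ∈ Set.Ico 0 q) :
    ∑ i, a i * q ^ (i : ℕ) < q ^ r := by
  induction r with
  | zero => simp
  | succ r ih =>
    have hlast : a (Fin.last r) * q ^ r ≤ (q - 1) * q ^ r :=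
      mul_le_mul_of_nonneg_right (by linarith [(ha (Fin.last r)).2]) (pow_nonneg hq.le r)
    rw [Fin.sum_univ_castSucc, pow_succ]
    have := ih (fun i => ha i.castSucc)
    simp only [Fin.val_castSucc, Fin.val_last]
    linarith

lemma lt_mul_of_lead_neg (hq : 0 < q) {r : ℕ} {m n : ℤ} (hm : 0 ≤ lead q r m)
    (hnm : n ≡ m [ZMOD q ^ (r + 1)]) (hn : lead q (r + 1) n < 0) : n < q * m := by
  obtain ⟨b, hb, hmb⟩ := exists_expand_lead hq r m
  obtain ⟨k, hk⟩ := hnm.symm.dvd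
  set B := lead q r m
  -- the level-`(r + 1)` digits of `n` are those of `m` followed by `lead q r m % q`
  set a : Fin (r + 1) → ℤ := Fin.snoc b (B % q)
  have ha : ∀ i, a i ∈ Set.Ico 0 q := by
    refine Fin.lastCases ?_ (fun i => ?_)
    · simpa [a] using ⟨Int.emod_nonneg B hq.ne', Int.emod_lt_of_pos B hq⟩
    · simpa [a] using hb i
  have hinit : Fin.init a = b := Fin.init_snoc _ _
  have hlast : a (Fin.last r) = B % q := Fin.snoc_last _ _
  have hm' : m = expand q b (B % q) + B / q * q ^ (r + 1) := by
    rw [← hmb, expand_eq_add _ b B, expand_eq_add _ b (B % q), pow_succ]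
    linear_combination (q ^ r) * (Int.emod_add_mul_ediv B q).symm
  set T := k + B / q - ∑ i, a i
  have hnT : n = expand q a T := by
    rw [expand_succ_eq_expand_init, hinit, hlast]
    linear_combination hk + hm'
  have hT : T ≤ -1 := by
    rw [hnT, lead_expand hq ha] at hn
    omega
  have hn' := expand_succ_eq_sum_add (q := q) a T
  rw [hinit, hlast, ← hnT] at hn'
  have hdigits := sum_digits_mul_pow_lt hq ha
  have hTq : T * q ^ (r + 1) ≤ -1 * q ^ (r + 1) :=
    mul_le_mul_of_nonneg_right hT (pow_nonneg hq.le _)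
  have hv : 0 ≤ q * (B / q) * q ^ (r + 1) :=
    mul_nonneg (mul_nonneg hq.le (Int.ediv_nonneg hm hq.le)) (pow_nonneg hq.le _)
  have hqm : q * m = q * expand q b (B % q) + q * (B / q) * q ^ (r + 1) := by
    rw [hm']
    ring
  linarith

lemma expand_sub_one_neg_one (r : ℕ) :
    expand q (fun _ : Fin r => q - 1) (-1) = r * q ^ (r + 1) - base q r 0 := by
  have h (i : Fin r) : (q - 1) * base q r i = q ^ (r + 1) - q ^ (i : ℕ) := by
    rw [mul_comm, base_mul_sub_one i.isLt.le]
  rw [expand, sum_congr rfl fun i _ => h i, sum_sub_distrib,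
    Fin.sum_univ_eq_sum_range (fun i => q ^ i), base_zero, sum_range_succ, sum_const, card_univ,
    Fintype.card_fin, nsmul_eq_mul]
  ring

lemma lead_frobenius (hq : 1 < q) (r : ℕ) : lead q r (r * q ^ (r + 1) - base q r 0) = -1 := by
  rw [← expand_sub_one_neg_one]
  exact lead_expand (by omega) (fun _ => ⟨by omega, by omega⟩) _

lemma lead_nonneg_of_frobenius_lt (hq : 1 < q) {r : ℕ} {n : ℤ}
    (hn : r * q ^ (r + 1) - base q r 0 < n) : 0 ≤ lead q r n := by
  obtain ⟨a, ha, hexp⟩ := exists_expand_lead (q := q) (by omega) r n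
  by_contra! hneg
  have : expand q a (lead q r n) ≤ expand q (fun _ : Fin r => q - 1) (-1) :=
    expand_le_expand (by omega) (fun i => by linarith [(ha i).2]) (by omega)
  rw [hexp, expand_sub_one_neg_one] at this
  linarith

lemma exists_nat_coeffs_of_lead_nonneg (hq : 0 < q) {r : ℕ} {n : ℤ} (hn : 0 ≤ lead q r n) :
    ∃ c : Fin (r + 1) → ℕ, n = ∑ i, (c i : ℤ) * base q r i := by
  obtain ⟨a, ha, hexp⟩ := exists_expand_lead hq r n
  refine ⟨Fin.snoc (fun i => (a i).toNat) (lead q r n).toNat, ?_⟩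
  simp only [Fin.sum_univ_castSucc, Fin.snoc_castSucc, Fin.snoc_last, Int.toNat_of_nonneg hn,
    Int.toNat_of_nonneg (ha _).1, Fin.val_castSucc, Fin.val_last, base_self]
  exact hexp.symm

end SAdic

lemma Finset.sum_countP_eq_sum_map_card_filter {α β : Type*} (s : Finset α) (P : Multiset β)
    (p : α → β → Prop) : ∑ a ∈ s, P.countP (p a) = (P.map fun b => #{a ∈ s | p a b}).sum := by
  induction P using Multiset.induction_on with
  | empty => simp
  | cons b P ih =>
    simp only [Multiset.countP_cons, Multiset.map_cons, Multiset.sum_cons, Finset.sum_add_distrib,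
      ih, Finset.sum_boole, Nat.cast_id]
    ring

lemma Multiset.sum_map_ite_eq {α M : Type*} [AddCommMonoid M] (P : Multiset α) (p : α → Prop)
    (a b : M) :
    (P.map fun x => if p x then a else b).sum = P.countP p • a + P.countP (¬p ·) • b := by
  induction P using Multiset.induction_on with
  | empty => simp
  | cons x P ih =>
    by_cases h : p x <;>
      simp only [map_cons, sum_cons, h, ↓reduceIte, ih, countP_cons_of_pos, countP_cons_of_neg,
        not_true_eq_false, not_false_eq_true, add_nsmul, one_smul] <;> abel

lemma Nat.mul_le_sub_one_mul_of_add_eq_mul {q Q n S : ℕ} (hq : 0 < q) (h : n + S = n * Q) :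
    q * S ≤ (q * Q - 1) * n := by
  rw [Nat.sub_mul, one_mul]
  apply Nat.le_sub_of_add_le
  calc q * S + n ≤ q * S + q * n := by gcongr; exact Nat.le_mul_of_pos_left n hq
    _ = q * Q * n := by rw [← mul_add, add_comm, h]; ring

section Geometry

variable {F : Type} [Field F] {V : Type} [AddCommGroup V] [Module F V]

lemma Submodule.finrank_inf_add_one_of_not_le [FiniteDimensional F V] {H U : Submodule F V}
    (hH : finrank F H + 1 = finrank F V) (hU : ¬U ≤ H) : finrank F ↥(U ⊓ H) + 1 = finrank F U := by
  have hlt : H < U ⊔ H := lt_of_le_of_ne le_sup_right fun h => hU (h ▸ le_sup_left)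
  have h1 := Submodule.finrank_lt_finrank_of_lt hlt
  have h2 := (U ⊔ H).finrank_le
  have h3 := Submodule.finrank_sup_add_finrank_inf_eq U H
  omega

lemma finrank_dualAnnihilator_add_one [FiniteDimensional F V] {X : Submodule F V}
    (hX : finrank F X = 1) : finrank F X.dualAnnihilator + 1 = finrank F (Dual F V) := by
  have := Subspace.finrank_add_finrank_dualAnnihilator_eq X
  rw [Subspace.dual_finrank_eq]
  omega

lemma exists_finrank_eq [FiniteDimensional F V] {k : ℕ} (hk : k ≤ finrank F V) :
    ∃ U : Submodule F V, finrank F U = k := by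
  let b := Module.finBasis F V
  refine ⟨Submodule.span F (Set.range (b ∘ Fin.castLE hk)), ?_⟩
  rw [finrank_span_eq_card (b.linearIndependent.comp _ (Fin.castLE_injective hk)),
    Fintype.card_fin]

noncomputable def restrictTo (P : Multiset (Submodule F V)) (H : Submodule F V) :
    Multiset (Submodule F H) :=
  (P.filter (· ≤ H)).map (Submodule.comap H.subtype)

lemma card_restrictTo (P : Multiset (Submodule F V)) (H : Submodule F V) :
    Multiset.card (restrictTo P H) = P.countP (· ≤ H) := by
  rw [restrictTo, Multiset.card_map, Multiset.countP_eq_card_filter]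

lemma countP_restrictTo (P : Multiset (Submodule F V)) {H : Submodule F V} (H' : Submodule F H) :
    (restrictTo P H).countP (· ≤ H') = P.countP (· ≤ H'.map H.subtype) := by
  rw [restrictTo, Multiset.countP_map, Multiset.filter_filter, ← Multiset.countP_eq_card_filter]
  refine Multiset.countP_congr rfl fun X _ => propext ⟨fun ⟨hXH', hXH⟩ => ?_, fun hX => ⟨?_, ?_⟩⟩
  · calc X = (X.comap H.subtype).map H.subtype := by
          rw [Submodule.map_comap_subtype, inf_eq_right.mpr hXH]
      _ ≤ H'.map H.subtype := Submodule.map_mono hXH'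
  · calc X.comap H.subtype ≤ (H'.map H.subtype).comap H.subtype := Submodule.comap_mono hX
      _ = H' := Submodule.comap_map_eq_of_injective H.injective_subtype H'
  · exact hX.trans (Submodule.map_subtype_le H H')

noncomputable def pointsIn [Finite V] (U : Submodule F V) : Finset (Submodule F V) :=
  (Set.toFinite {X : Submodule F V | X ≤ U ∧ finrank F X = 1}).toFinset

lemma mem_pointsIn [Finite V] {U X : Submodule F V} : X ∈ pointsIn U ↔ X ≤ U ∧ finrank F X = 1 :=
  Set.Finite.mem_toFinset _

lemma filter_pointsIn [Finite V] (U H : Submodule F V) :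
    (pointsIn U).filter (· ≤ H) = pointsIn (U ⊓ H) := by
  ext X
  simp only [mem_filter, mem_pointsIn, le_inf_iff]
  tauto

variable [Fintype F]

lemma natCard_subtype_le_ker [FiniteDimensional F V] (A : Submodule F (Dual F V))
    (X : Submodule F V) :
    Nat.card {φ : A // X ≤ LinearMap.ker (φ : Dual F V)} =
      Fintype.card F ^ finrank F ↥(A ⊓ X.dualAnnihilator) := by
  rw [← Nat.card_eq_fintype_card,
    ← Module.natCard_eq_pow_finrank (V := ↥(A ⊓ X.dualAnnihilator))]
  refine Nat.card_congr ((Equiv.subtypeSubtypeEquivSubtypeInter (· ∈ A)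
    (fun φ : Dual F V => X ≤ LinearMap.ker φ)).trans (Equiv.subtypeEquivRight fun φ => ?_))
  rw [Submodule.mem_inf, Submodule.mem_dualAnnihilator]
  rfl

lemma sum_countP_le_ker [FiniteDimensional F V] (A : Submodule F (Dual F V)) [Fintype A]
    (P : Multiset (Submodule F V)) :
    ∑ φ : A, P.countP (· ≤ LinearMap.ker (φ : Dual F V)) =
      (P.map fun X => Fintype.card F ^ finrank F ↥(A ⊓ X.dualAnnihilator)).sum := by
  rw [Finset.sum_countP_eq_sum_map_card_filter]
  congr 1
  refine Multiset.map_congr rfl fun X _ => ?_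
  rw [← natCard_subtype_le_ker, Nat.card_eq_fintype_card, Fintype.card_subtype]

lemma IsDivisible.countP_modEq {r : ℕ} {P : Multiset (Submodule F V)} (hP : IsDivisible F r P)
    {H : Submodule F V} (hH : finrank F H + 1 = finrank F V) :
    P.countP (· ≤ H) ≡ Multiset.card P [MOD Fintype.card F ^ r] := by
  rw [Multiset.countP_eq_card_filter]
  exact hP.2 H hH

lemma IsDivisible.countP_le_ker_modEq [FiniteDimensional F V] {r : ℕ}
    {P : Multiset (Submodule F V)} (hP : IsDivisible F r P) (φ : Dual F V) :
    P.countP (· ≤ LinearMap.ker φ) ≡ Multiset.card P [MOD Fintype.card F ^ r] := by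
  rcases eq_or_ne φ 0 with rfl | hφ
  · rw [LinearMap.ker_zero, Multiset.countP_eq_card.mpr fun _ _ => le_top]
  · exact hP.countP_modEq (Dual.finrank_ker_add_one_of_ne_zero hφ)

/-- Double count over the `q ^ 2` functionals vanishing on `W`: a point of `W` lies in all their
kernels, any other point in exactly `q` of them. -/
lemma IsDivisible.countP_modEq_of_finrank_add_two [FiniteDimensional F V] {r : ℕ}
    {P : Multiset (Submodule F V)} (hP : IsDivisible F (r + 1) P) {W : Submodule F V}
    (hW : finrank F W + 2 = finrank F V) :
    P.countP (· ≤ W) ≡ Multiset.card P [MOD Fintype.card F ^ r] := by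
  have hA : finrank F W.dualAnnihilator = 2 := by
    have := Subspace.finrank_add_finrank_dualAnnihilator_eq W
    omega
  have hfiber : ∀ X ∈ P, Fintype.card F ^ finrank F ↥(W.dualAnnihilator ⊓ X.dualAnnihilator) =
      if X ≤ W then Fintype.card F ^ 2 else Fintype.card F := by
    intro X hX
    split_ifs with hXW
    · rw [inf_eq_left.mpr (Submodule.dualAnnihilator_anti hXW), hA]
    · have hAX : ¬W.dualAnnihilator ≤ X.dualAnnihilator := by
        rwa [Subspace.dualAnnihilator_le_dualAnnihilator_iff]
      have := Submodule.finrank_inf_add_one_of_not_le (V := Dual F V)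
        (finrank_dualAnnihilator_add_one (hP.1 X hX)) hAX
      rw [show finrank F ↥(W.dualAnnihilator ⊓ X.dualAnnihilator) = 1 by omega, pow_one]
  have : Finite W.dualAnnihilator := Module.finite_of_finite F
  let _ : Fintype W.dualAnnihilator := Fintype.ofFinite _
  have hsum := Nat.ModEq.sum (s := univ) fun (φ : W.dualAnnihilator) _ => hP.countP_le_ker_modEq φ
  rw [sum_countP_le_ker, Multiset.map_congr rfl hfiber, Multiset.sum_map_ite_eq, sum_const,
    card_univ, Module.card_eq_pow_finrank (K := F) (V := W.dualAnnihilator), hA,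
    Multiset.card_eq_countP_add_countP (· ≤ W) P] at hsum
  rw [Multiset.card_eq_countP_add_countP (· ≤ W) P]
  generalize P.countP (· ≤ W) = a, P.countP (¬· ≤ W) = b at hsum ⊢
  have hq : (Fintype.card F : ℤ) ≠ 0 := Nat.cast_ne_zero.mpr Fintype.card_ne_zero
  rw [Nat.modEq_iff_dvd] at hsum ⊢
  push_cast [smul_eq_mul] at hsum ⊢
  have h : (Fintype.card F : ℤ) ^ r * Fintype.card F ∣
      ((Fintype.card F - 1) * b) * Fintype.card F := by
    rw [← pow_succ]
    convert hsum using 1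
    ring
  have hcop : IsCoprime ((Fintype.card F : ℤ) ^ r) (Fintype.card F - 1) :=
    IsCoprime.pow_left ⟨1, -1, by ring⟩
  simpa using hcop.dvd_of_dvd_mul_left ((mul_dvd_mul_iff_right hq).mp h)

lemma IsDivisible.restrictTo [FiniteDimensional F V] {r : ℕ} {P : Multiset (Submodule F V)}
    (hP : IsDivisible F (r + 1) P) {H : Submodule F V} (hH : finrank F H + 1 = finrank F V) :
    IsDivisible F r (restrictTo P H) := by
  refine ⟨fun Y hY => ?_, fun H' hH' => ?_⟩
  · obtain ⟨X, hX, rfl⟩ := Multiset.mem_map.mp hY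
    obtain ⟨hXP, hXH⟩ := Multiset.mem_filter.mp hX
    rw [(Submodule.comapSubtypeEquivOfLe hXH).finrank_eq]
    exact hP.1 X hXP
  · have hW : finrank F (H'.map H.subtype) + 2 = finrank F V := by
      rw [Submodule.finrank_map_subtype_eq]
      omega
    have hHr : P.countP (· ≤ H) ≡ Multiset.card P [MOD Fintype.card F ^ r] :=
      Nat.ModEq.of_mul_right (Fintype.card F) (pow_succ (Fintype.card F) r ▸ hP.countP_modEq hH)
    rw [← Multiset.countP_eq_card_filter, countP_restrictTo, card_restrictTo]
    exact (hP.countP_modEq_of_finrank_add_two hW).trans hHr.symm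

lemma sum_countP_le_ker_top [FiniteDimensional F V] [Fintype (⊤ : Submodule F (Dual F V))]
    {P : Multiset (Submodule F V)} (hP : ∀ X ∈ P, finrank F X = 1) :
    ∑ φ : (⊤ : Submodule F (Dual F V)), P.countP (· ≤ LinearMap.ker (φ : Dual F V)) =
      Multiset.card P * Fintype.card F ^ (finrank F V - 1) := by
  have hfiber : ∀ X ∈ P, Fintype.card F ^ finrank F ↥(⊤ ⊓ X.dualAnnihilator) =
      Fintype.card F ^ (finrank F V - 1) := by
    intro X hX
    have := finrank_dualAnnihilator_add_one (hP X hX)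
    rw [Subspace.dual_finrank_eq] at this
    rw [top_inf_eq, show finrank F X.dualAnnihilator = finrank F V - 1 by omega]
  rw [sum_countP_le_ker, Multiset.map_congr rfl hfiber, Multiset.map_const',
    Multiset.sum_replicate, smul_eq_mul]

/-- Each point lies in the kernels of `q ^ (d - 1)` of the `q ^ d` functionals, so the counts on
the kernels of the `q ^ d - 1` nonzero ones average to less than `card P / q`. -/
lemma exists_hyperplane_mul_countP_le [FiniteDimensional F V] {P : Multiset (Submodule F V)}
    (hP : ∀ X ∈ P, finrank F X = 1) (hP0 : P ≠ 0) :
    ∃ H : Submodule F V, finrank F H + 1 = finrank F V ∧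
      Fintype.card F * P.countP (· ≤ H) ≤ Multiset.card P := by
  obtain ⟨X₀, hX₀⟩ := Multiset.exists_mem_of_ne_zero hP0
  have hd : 1 ≤ finrank F V := hP X₀ hX₀ ▸ X₀.finrank_le
  have : Finite (⊤ : Submodule F (Dual F V)) := Module.finite_of_finite F
  let _ : Fintype (⊤ : Submodule F (Dual F V)) := Fintype.ofFinite _
  set S := univ.erase (0 : (⊤ : Submodule F (Dual F V)))
  have htotal := sum_countP_le_ker_top hP
  rw [← add_sum_erase _ _ (mem_univ 0), ZeroMemClass.coe_zero, LinearMap.ker_zero,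
    Multiset.countP_eq_card.mpr fun _ _ => le_top] at htotal
  have hcard : #S = Fintype.card F ^ finrank F V - 1 := by
    rw [card_erase_of_mem (mem_univ _), card_univ, Module.card_eq_pow_finrank (K := F),
      finrank_top, Subspace.dual_finrank_eq]
  have hS : S.Nonempty := by
    rw [← card_pos, hcard]
    have := Nat.one_lt_pow (by omega : finrank F V ≠ 0) (Fintype.one_lt_card (α := F))
    omega
  have hsum : ∑ φ ∈ S, Fintype.card F * P.countP (· ≤ LinearMap.ker (φ : Dual F V)) ≤
      ∑ _φ ∈ S, Multiset.card P := by
    rw [← mul_sum, sum_const, hcard, smul_eq_mul, ← Nat.sub_add_cancel hd, pow_succ']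
    exact Nat.mul_le_sub_one_mul_of_add_eq_mul Fintype.card_pos htotal
  obtain ⟨φ, hφ, hle⟩ := exists_le_of_sum_le hS hsum
  refine ⟨LinearMap.ker (φ : Dual F V), Dual.finrank_ker_add_one_of_ne_zero ?_, hle⟩
  exact fun h => ne_of_mem_erase hφ (Subtype.ext h)

theorem IsDivisible.lead_card_nonneg {r : ℕ} : ∀ {V : Type} [AddCommGroup V] [Module F V]
    [FiniteDimensional F V] {P : Multiset (Submodule F V)}, IsDivisible F r P →
    0 ≤ SAdic.lead (Fintype.card F) r (Multiset.card P) := by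
  induction r with
  | zero => exact fun _ => Int.natCast_nonneg _
  | succ r ih =>
    intro V _ _ _ P hP
    by_contra! hneg
    have hq : (0 : ℤ) < Fintype.card F := by exact_mod_cast Fintype.card_pos
    have hP0 : P ≠ 0 := by
      rintro rfl
      simp [SAdic.lead_zero hq] at hneg
    obtain ⟨H, hH, hle⟩ := exists_hyperplane_mul_countP_le hP.1 hP0
    have hm := ih (hP.restrictTo hH)
    rw [card_restrictTo] at hm
    have hnm := (Int.natCast_modEq_iff.mpr (hP.countP_modEq hH)).symm
    push_cast at hnm
    have := SAdic.lt_mul_of_lead_neg hq hm hnm hneg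
    exact_mod_cast (this.trans_le (by exact_mod_cast hle)).false

variable (F V) in
def isDivisibleAddSubmonoid (r : ℕ) : AddSubmonoid (Multiset (Submodule F V)) where
  carrier := {P | IsDivisible F r P}
  add_mem' {P Q} hP hQ := by
    refine ⟨fun X hX => (Multiset.mem_add.mp hX).elim (hP.1 X) (hQ.1 X), fun H hH => ?_⟩
    rw [Multiset.filter_add, Multiset.card_add, Multiset.card_add]
    exact (hP.2 H hH).add (hQ.2 H hH)
  zero_mem' := ⟨by simp, fun H _ => by simp [Nat.ModEq.refl]⟩

section Construction

variable [Finite V]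

lemma card_pointsIn_mul (U : Submodule F V) :
    #(pointsIn U) * (Fintype.card F - 1) = Fintype.card F ^ finrank F U - 1 := by
  let e : {Y : Submodule F U // finrank F Y = 1} ≃
      {X : Submodule F V // X ≤ U ∧ finrank F X = 1} :=
    ((Submodule.MapSubtype.orderIso U).toEquiv.subtypeEquiv fun Y => by
      rw [← Submodule.finrank_map_subtype_eq U Y]
      rfl).trans (Equiv.subtypeSubtypeEquivSubtypeInter (· ≤ U) (finrank F · = 1))
  rw [pointsIn, ← Set.ncard_eq_toFinset_card, ← Nat.card_coe_set_eq, Set.coe_ofPred,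
    ← Nat.card_congr e, ← Nat.card_congr (Projectivization.equivSubmodule F U),
    ← Nat.card_eq_fintype_card, ← Projectivization.card, Module.natCard_eq_pow_finrank (K := F)]

lemma card_pointsIn_eq_add {U H : Submodule F V} {k : ℕ} (hU : finrank F U = k + 1)
    (hH : finrank F H + 1 = finrank F V) (hUH : ¬U ≤ H) :
    #(pointsIn U) = #(pointsIn (U ⊓ H)) + Fintype.card F ^ k := by
  have hUH' := Submodule.finrank_inf_add_one_of_not_le hH hUH
  have h1 := card_pointsIn_mul U
  have h2 := card_pointsIn_mul (U ⊓ H)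
  rw [hU] at h1
  rw [show finrank F ↥(U ⊓ H) = k by omega] at h2
  have hq : 1 ≤ Fintype.card F - 1 := Nat.le_sub_of_add_le Fintype.one_lt_card
  have hk : 1 ≤ Fintype.card F ^ k := Nat.one_le_pow _ _ Fintype.card_pos
  refine Nat.eq_of_mul_eq_mul_right hq ?_
  rw [h1, add_mul, h2]
  zify [hk, Nat.one_le_pow (k + 1) _ Fintype.card_pos, Fintype.card_pos (α := F)]
  ring

lemma isDivisible_nsmul_pointsIn {U : Submodule F V} {k : ℕ} (hU : finrank F U = k + 1) (i : ℕ) :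
    IsDivisible F (k + i) (Fintype.card F ^ i • (pointsIn U).val) := by
  refine ⟨fun X hX => (mem_pointsIn.mp (Multiset.mem_of_mem_nsmul hX)).2, fun H hH => ?_⟩
  rw [Multiset.filter_nsmul, Multiset.card_nsmul, Multiset.card_nsmul, ← Finset.filter_val,
    Finset.card_val, Finset.card_val, filter_pointsIn]
  by_cases hUH : U ≤ H
  · rw [inf_eq_left.mpr hUH]
  · rw [card_pointsIn_eq_add hU hH hUH, mul_add, ← pow_add, add_comm i k]
    exact (Nat.add_mod_right _ _).symm

lemma card_nsmul_pointsIn {U : Submodule F V} {k : ℕ} (hU : finrank F U = k + 1) (i : ℕ) :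
    (Multiset.card (Fintype.card F ^ i • (pointsIn U).val) : ℤ) =
      SAdic.base (Fintype.card F) (k + i) i := by
  have hq : (Fintype.card F : ℤ) - 1 ≠ 0 := by
    have : 1 < Fintype.card F := Fintype.one_lt_card
    omega
  have h := card_pointsIn_mul U
  rw [hU] at h
  zify [Fintype.card_pos (α := F), Nat.one_le_pow (k + 1) _ Fintype.card_pos] at h
  refine mul_right_cancel₀ hq ?_
  rw [SAdic.base_mul_sub_one (by omega), Multiset.card_nsmul, Finset.card_val]
  push_cast
  rw [mul_assoc, h]
  ring

theorem exists_isDivisible_card_eq {r : ℕ} (hV : r + 1 ≤ finrank F V)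
    (c : Fin (r + 1) → ℕ) :
    ∃ P : Multiset (Submodule F V), IsDivisible F r P ∧
      (Multiset.card P : ℤ) = ∑ i, (c i : ℤ) * SAdic.base (Fintype.card F) r i := by
  choose U hU using fun i : Fin (r + 1) =>
    exists_finrank_eq (F := F) (V := V) (k := r - i + 1) (by omega)
  have hblock (i : Fin (r + 1)) : r - i + i = r := Nat.sub_add_cancel i.is_le
  have hdiv (i : Fin (r + 1)) :
      IsDivisible F r (Fintype.card F ^ (i : ℕ) • (pointsIn (U i)).val) := by
    simpa only [hblock] using isDivisible_nsmul_pointsIn (hU i) i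
  refine ⟨∑ i, c i • Fintype.card F ^ (i : ℕ) • (pointsIn (U i)).val, ?_, ?_⟩
  · exact AddSubmonoid.sum_mem (isDivisibleAddSubmonoid F V r) fun i _ =>
      AddSubmonoid.nsmul_mem _ (hdiv i) _
  · rw [Multiset.card_sum]
    push_cast
    refine sum_congr rfl fun i _ => ?_
    rw [Multiset.card_nsmul, Nat.cast_mul, card_nsmul_pointsIn (hU i), hblock]

end Construction

end Geometry

/-- The largest integer that is not the cardinality of any `q^r`-divisible multiset of points
over `F_q` is `r·q^(r+1) - (q^(r+1)-1)/(q-1) = r·q^(r+1) - Σ_{j=0}^r q^j`. -/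
theorem frobenius_number_divisible (F : Type) [Field F] [Fintype F] (r : ℕ) :
    (¬ ∃ (m : ℕ) (P : Multiset (Submodule F (Fin m → F))),
        IsDivisible F r P ∧
          (Multiset.card P : ℤ) =
            (r : ℤ) * (Fintype.card F : ℤ) ^ (r + 1) -
              ∑ j ∈ Finset.range (r + 1), (Fintype.card F : ℤ) ^ j) ∧
    ∀ n : ℤ,
      (r : ℤ) * (Fintype.card F : ℤ) ^ (r + 1) -
          (∑ j ∈ Finset.range (r + 1), (Fintype.card F : ℤ) ^ j) < n →
      ∃ (m : ℕ) (P : Multiset (Submodule F (Fin m → F))),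
        IsDivisible F r P ∧ (Multiset.card P : ℤ) = n := by
  have hq : 1 < (Fintype.card F : ℤ) := by exact_mod_cast Fintype.one_lt_card
  simp only [← SAdic.base_zero]
  refine ⟨fun ⟨m, P, hP, hcard⟩ => ?_, fun n hn => ?_⟩
  · have := hP.lead_card_nonneg
    rw [hcard, SAdic.lead_frobenius hq] at this
    omega
  · obtain ⟨c, hc⟩ := SAdic.exists_nat_coeffs_of_lead_nonneg (by omega)
      (SAdic.lead_nonneg_of_frobenius_lt hq hn)
    obtain ⟨P, hP, hcard⟩ :=
      exists_isDivisible_card_eq (V := Fin (r + 1) → F) (Module.finrank_fin_fun F).ge c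
    exact ⟨r + 1, P, hP, hcard.trans hc.symm⟩
end

section
/- Let q ≥ 2 be an integer and r ≥ 0. The largest integer n whose S_q(r)-adic expansion has negative leading coefficient is n = Σ_{i=0}^{r−1} (q−1)·s_q(r,i) − q^r = r·q^{r+1} − (q^{r+1}−1)/(q−1). -/
/-!
All weights `s_q(r,i)` are positive, so the value of a digit vector is monotone in the digits.
Hence among admissible digit vectors with leading coefficient `≤ -1` the value is largest for
`(q - 1, …, q - 1, -1)`, and its value telescopes via `(q - 1) s_q(r,i) = q^(r+1) - q^i`.
-/

open Finset

theorem sub_one_mul_sum_Icc_pow {R : Type*} [CommRing R] (x : R) {i r : ℕ} (hi : i ≤ r) :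
    (x - 1) * ∑ j ∈ Icc i r, x ^ j = x ^ (r + 1) - x ^ i := by
  rw [← Ico_add_one_right_eq_Icc, mul_comm]
  exact geom_sum_Ico_mul x (by omega)

theorem sum_range_sub_one_mul_sum_Icc_pow {R : Type*} [CommRing R] (x : R) (r : ℕ) :
    ∑ i ∈ range r, (x - 1) * ∑ j ∈ Icc i r, x ^ j = r * x ^ (r + 1) - ∑ j ∈ range r, x ^ j := by
  rw [sum_congr rfl fun i hi => sub_one_mul_sum_Icc_pow x (mem_range.mp hi).le,
    sum_sub_distrib, sum_const, card_range, nsmul_eq_mul]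

def sAdicValue (q r : ℕ) (a : Fin (r + 1) → ℤ) : ℤ :=
  ∑ i : Fin (r + 1), a i * ∑ j ∈ Icc (i : ℕ) r, (q : ℤ) ^ j

theorem sAdicValue_mono (q r : ℕ) {a b : Fin (r + 1) → ℤ} (hab : a ≤ b) :
    sAdicValue q r a ≤ sAdicValue q r b :=
  sum_le_sum fun i _ => mul_le_mul_of_nonneg_right (hab i) (by positivity)

/-- The pointwise largest admissible digit vector with negative leading coefficient. -/
def maxNegDigits (q r : ℕ) (i : Fin (r + 1)) : ℤ :=
  if (i : ℕ) < r then (q : ℤ) - 1 else -1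

theorem sAdicValue_maxNegDigits (q r : ℕ) :
    sAdicValue q r (maxNegDigits q r) =
      ∑ i ∈ range r, ((q : ℤ) - 1) * ∑ j ∈ Icc i r, (q : ℤ) ^ j - (q : ℤ) ^ r := by
  rw [sAdicValue, Fin.sum_univ_castSucc, ← Fin.sum_univ_eq_sum_range
    (fun i => ((q : ℤ) - 1) * ∑ j ∈ Icc i r, (q : ℤ) ^ j)]
  simp [maxNegDigits, sub_eq_add_neg]

theorem le_maxNegDigits {q r : ℕ} {a : Fin (r + 1) → ℤ}
    (ha : ∀ i : Fin (r + 1), (i : ℕ) < r → a i ≤ (q : ℤ) - 1) (hlast : a (Fin.last r) < 0) :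
    a ≤ maxNegDigits q r := by
  intro i
  unfold maxNegDigits
  split_ifs with hi
  · exact ha i hi
  · obtain rfl : i = Fin.last r := Fin.ext (by simp only [Fin.val_last]; omega)
    linarith

/-- The largest integer whose `S_q(r)`-adic expansion has negative leading coefficient is
`n₀ = Σ_{i=0}^{r-1} (q-1)·s_q(r,i) - q^r = r·q^(r+1) - (q^(r+1)-1)/(q-1)`. -/
theorem largest_negative_leading_coefficient (q : ℕ) (hq : 2 ≤ q) (r : ℕ) :
    ((∑ i ∈ Finset.range r, ((q : ℤ) - 1) * ∑ j ∈ Finset.Icc i r, (q : ℤ) ^ j) - (q : ℤ) ^ r =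
        (r : ℤ) * (q : ℤ) ^ (r + 1) - ∑ j ∈ Finset.range (r + 1), (q : ℤ) ^ j) ∧
    (∃ a : Fin (r + 1) → ℤ,
        (∀ i : Fin (r + 1), (i : ℕ) < r → 0 ≤ a i ∧ a i ≤ (q : ℤ) - 1) ∧
        a (Fin.last r) < 0 ∧
        (∑ i ∈ Finset.range r, ((q : ℤ) - 1) * ∑ j ∈ Finset.Icc i r, (q : ℤ) ^ j) - (q : ℤ) ^ r =
          ∑ i : Fin (r + 1), a i * ∑ j ∈ Finset.Icc (i : ℕ) r, (q : ℤ) ^ j) ∧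
    ∀ n : ℤ,
      (∑ i ∈ Finset.range r, ((q : ℤ) - 1) * ∑ j ∈ Finset.Icc i r, (q : ℤ) ^ j) - (q : ℤ) ^ r
        < n →
      ∀ a : Fin (r + 1) → ℤ,
        (∀ i : Fin (r + 1), (i : ℕ) < r → 0 ≤ a i ∧ a i ≤ (q : ℤ) - 1) →
        n = ∑ i : Fin (r + 1), a i * ∑ j ∈ Finset.Icc (i : ℕ) r, (q : ℤ) ^ j →
        0 ≤ a (Fin.last r) := by
  refine ⟨?_, ⟨maxNegDigits q r, fun i hi => ?_, by simp [maxNegDigits],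
    (sAdicValue_maxNegDigits q r).symm⟩, ?_⟩
  · rw [sum_range_sub_one_mul_sum_Icc_pow, sum_range_succ]
    ring
  · simp only [maxNegDigits, if_pos hi]
    omega
  · rintro n hn a ha rfl
    by_contra! hlast
    have hle := sAdicValue_mono q r (le_maxNegDigits (fun i hi => (ha i hi).2) hlast)
    rw [sAdicValue_maxNegDigits] at hle
    exact hn.not_ge hle
end

section
/- Let q ≥ 2 and r ≥ 0 be integers and n ∈ ℤ. Then n can be written as Σ_{i=0}^{r} a_i·s_q(r,i) with non-negative integers a_i if and only if the leading coefficient of the unique S_q(r)-adic expansion of n is non-negative. -/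
/-! Carrying normalises any non-negative combination: if a non-leading coefficient `a_i` is at
least `q`, replacing `q • s_q(r,i)` by `s_q(r,i+1) + q • s_q(r,r)` keeps the value and the
non-negativity of all coefficients, and since `q ≥ 2` it strictly lowers the sum of the
non-leading coefficients. When no carry is possible, the coefficients form the `S_q(r)`-adic
expansion, with non-negative leading coefficient. Conversely such an expansion is itself a
non-negative combination. -/

open Finset

/-- `s_q(r,i)`. -/
def tailGeomSum (q r i : ℕ) : ℤ := ∑ j ∈ Icc i r, (q : ℤ) ^ j

lemma tailGeomSum_self (q i : ℕ) : tailGeomSum q i i = (q : ℤ) ^ i := by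
  simp [tailGeomSum]

lemma tailGeomSum_succ_right {q r i : ℕ} (h : i ≤ r + 1) :
    tailGeomSum q (r + 1) i = tailGeomSum q r i + (q : ℤ) ^ (r + 1) :=
  sum_Icc_succ_top h _

lemma mul_tailGeomSum (q : ℕ) {r i : ℕ} (hi : i < r) :
    q * tailGeomSum q r i = tailGeomSum q r (i + 1) + q * tailGeomSum q r r := by
  induction r, (hi : i + 1 ≤ r) using Nat.le_induction with
  | base =>
    simp only [Nat.succ_eq_add_one]
    rw [tailGeomSum_succ_right (by omega), tailGeomSum_self, tailGeomSum_self]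
    ring
  | succ r hir ih =>
    rw [tailGeomSum_self] at ih
    rw [tailGeomSum_succ_right (by omega), tailGeomSum_succ_right (by omega), tailGeomSum_self]
    linear_combination ih

section Carry

variable {q r : ℕ}

def tailGeomComb (q r : ℕ) (a : Fin (r + 1) → ℕ) : ℤ := ∑ i, (a i : ℤ) * tailGeomSum q r i

def lowMass (r : ℕ) (a : Fin (r + 1) → ℕ) : ℕ := ∑ i : Fin r, a i.castSucc

lemma tailGeomComb_add (a b : Fin (r + 1) → ℕ) :
    tailGeomComb q r (a + b) = tailGeomComb q r a + tailGeomComb q r b := by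
  simp only [tailGeomComb, Pi.add_apply, Nat.cast_add, add_mul, sum_add_distrib]

lemma tailGeomComb_single (j : Fin (r + 1)) (c : ℕ) :
    tailGeomComb q r (Pi.single j c) = c * tailGeomSum q r j := by
  simp [tailGeomComb, Pi.single_apply]

lemma lowMass_add (a b : Fin (r + 1) → ℕ) : lowMass r (a + b) = lowMass r a + lowMass r b :=
  sum_add_distrib

lemma lowMass_add_last (a : Fin (r + 1) → ℕ) : lowMass r a + a (Fin.last r) = ∑ i, a i :=
  (Fin.sum_univ_castSucc a).symm

lemma lowMass_single_le (j : Fin (r + 1)) (c : ℕ) : lowMass r (Pi.single j c) ≤ c := by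
  have := lowMass_add_last (Pi.single j c)
  simp only [sum_pi_single', mem_univ, if_true] at this
  omega

lemma lowMass_single_castSucc (i : Fin r) (c : ℕ) : lowMass r (Pi.single i.castSucc c) = c := by
  simp [lowMass, Pi.single_apply]

lemma lowMass_single_last (c : ℕ) : lowMass r (Pi.single (Fin.last r) c) = 0 := by
  simp [lowMass]

lemma exists_carry (hq : 2 ≤ q) {a : Fin (r + 1) → ℕ} {i : Fin r} (hi : q ≤ a i.castSucc) :
    ∃ a', tailGeomComb q r a' = tailGeomComb q r a ∧ lowMass r a' < lowMass r a := by
  set b := a - Pi.single i.castSucc q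
  have hab : a = b + Pi.single i.castSucc q := by
    refine (tsub_add_cancel_of_le fun j => ?_).symm
    by_cases hj : j = i.castSucc
    · subst hj; simpa using hi
    · simp [hj]
  refine ⟨b + Pi.single i.succ 1 + Pi.single (Fin.last r) q, ?_, ?_⟩
  · have hcarry := mul_tailGeomSum q i.isLt
    rw [hab]
    simp only [tailGeomComb_add, tailGeomComb_single, Fin.val_succ, Fin.val_castSucc, Fin.val_last]
    linear_combination -hcarry
  · rw [hab]
    simp only [lowMass_add, lowMass_single_castSucc, lowMass_single_last]
    have := lowMass_single_le (r := r) i.succ 1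
    omega

lemma exists_digits_tailGeomComb_eq (hq : 2 ≤ q) (a : Fin (r + 1) → ℕ) :
    ∃ b : Fin (r + 1) → ℕ, (∀ i : Fin r, b i.castSucc < q) ∧
      tailGeomComb q r b = tailGeomComb q r a := by
  induction a using (measure (lowMass r)).wf.induction with
  | h a ih =>
    by_cases hdigits : ∀ i : Fin r, a i.castSucc < q
    · exact ⟨a, hdigits, rfl⟩
    obtain ⟨i, hi⟩ : ∃ i : Fin r, q ≤ a i.castSucc := by simpa using hdigits
    obtain ⟨a', hval, hlt⟩ := exists_carry hq hi
    obtain ⟨b, hb, hbval⟩ := ih a' hlt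
    exact ⟨b, hb, hbval.trans hval⟩

end Carry

/-- An integer `n` is a non-negative integral combination of the numbers `s_q(r,i)` if and
only if the leading coefficient of its unique `S_q(r)`-adic expansion is non-negative. -/
theorem nonneg_combination_iff_leading_coefficient_nonneg (q : ℕ) (hq : 2 ≤ q) (r : ℕ)
    (n : ℤ) :
    (∃ a : Fin (r + 1) → ℕ,
        n = ∑ i : Fin (r + 1), (a i : ℤ) * ∑ j ∈ Finset.Icc (i : ℕ) r, (q : ℤ) ^ j) ↔
      ∃ a : Fin (r + 1) → ℤ,
        (∀ i : Fin (r + 1), (i : ℕ) < r → 0 ≤ a i ∧ a i ≤ (q : ℤ) - 1) ∧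
        0 ≤ a (Fin.last r) ∧
        n = ∑ i : Fin (r + 1), a i * ∑ j ∈ Finset.Icc (i : ℕ) r, (q : ℤ) ^ j := by
  constructor
  · rintro ⟨a, rfl⟩
    obtain ⟨b, hb, hbval⟩ := exists_digits_tailGeomComb_eq hq a
    refine ⟨fun i => b i, fun i hi => ⟨by positivity, ?_⟩, by positivity, hbval.symm⟩
    have := hb (i.castLT hi)
    rw [Fin.castSucc_castLT] at this
    change (b i : ℤ) ≤ q - 1
    omega
  · rintro ⟨a, hdigits, hlast, rfl⟩
    have hnonneg (i : Fin (r + 1)) : 0 ≤ a i := by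
      rcases Fin.eq_castSucc_or_eq_last i with ⟨j, rfl⟩ | rfl
      · exact (hdigits _ j.isLt).1
      · exact hlast
    exact ⟨fun i => (a i).toNat, sum_congr rfl fun i _ => by rw [Int.toNat_of_nonneg (hnonneg i)]⟩
end

section
/- Let P be a non-empty q^r-divisible multiset of points over F_q of cardinality n, and let σ be the cross sum of the S_q(r)-adic expansion of n. Then for every hyperplane H, writing #P − #(P∩H) = τ·q^r with τ ∈ ℤ, one has τ ≤ σ. Equivalently, the maximum weight of a full-length q^r-divisible linear code of length n over F_q is at most σ·q^r. -/
open scoped Classical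

/-!
Restricting a `q^(r+1)`-divisible multiset `P` of size `n` to a hyperplane `H` gives a
`q^r`-divisible multiset of size `n - τ q^(r+1)`. As `s_q(r+1, i) = s_q(r, i) + q^(r+1)`, this size
has an `S_q(r)`-adic expansion with the lower digits of `n` and top digit `a_r + (σ - τ) q`. By
the characterization theorem that top digit is nonnegative, and `a_r ≤ q - 1` forces `τ ≤ σ`.

The characterization theorem is proved alongside, by induction on `r`. Averaging over all
hyperplanes gives one, `K`, with `q #(P ∩ K) < n`; together with `τ ≤ σ` for `K` and
`n (q - 1) = σ q^(r+1) - ∑ a_i q^i`, this makes `∑ a_i q^i` positive, while the digits below the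
top one contribute less than `q^r`.

The restriction is divisible because the `q + 1` hyperplanes through a codimension-2 subspace `S`
contain each point of `P ∩ S` `q + 1` times and every other point once.
-/

open Finset Module

/-- The paper's `s_q(r, i)`. -/
def sBase (q : ℤ) (r i : ℕ) : ℤ := ∑ j ∈ Icc i r, q ^ j

def expansion (q : ℤ) (r : ℕ) (a : Fin (r + 1) → ℤ) : ℤ := ∑ i, a i * sBase q r i

def IsDigitSeq (q : ℤ) (r : ℕ) (a : Fin (r + 1) → ℤ) : Prop :=
  ∀ i : Fin (r + 1), (i : ℕ) < r → 0 ≤ a i ∧ a i ≤ q - 1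

section Expansion

variable {q : ℤ} {r : ℕ}

lemma sBase_self : sBase q r r = q ^ r := by simp [sBase]

lemma sBase_succ_right {i : ℕ} (hi : i ≤ r + 1) :
    sBase q (r + 1) i = sBase q r i + q ^ (r + 1) :=
  sum_Icc_succ_top hi _

lemma sBase_succ_succ (i : ℕ) : sBase q (r + 1) (i + 1) = q * sBase q r i := by
  rw [sBase, sBase, ← map_add_right_Icc i r 1, sum_map, mul_sum]
  simp [pow_succ']

lemma sBase_succ_zero : sBase q (r + 1) 0 = 1 + q * sBase q r 0 := by
  rw [← sBase_succ_succ, sBase, sBase, ← insert_Icc_add_one_left_eq_Icc (Nat.zero_le _),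
    sum_insert (by simp), pow_zero]

lemma sBase_mul_sub_one {i : ℕ} (hi : i ≤ r + 1) :
    sBase q r i * (q - 1) = q ^ (r + 1) - q ^ i := by
  rw [sBase, ← Ico_add_one_right_eq_Icc, geom_sum_Ico_mul q hi]

lemma expansion_zero (a : Fin 1 → ℤ) : expansion q 0 a = a 0 := by
  simp [expansion, sBase_self]

lemma expansion_succ (a : Fin (r + 2) → ℤ) :
    expansion q (r + 1) a = expansion q r (Fin.init a) + (∑ i, a i) * q ^ (r + 1) := by
  have hlast : sBase q r (r + 1) = 0 := by simp [sBase]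
  simp only [expansion, fun i : Fin (r + 2) => sBase_succ_right (q := q) i.is_le, mul_add,
    sum_add_distrib, sum_mul, Fin.sum_univ_castSucc (fun i => a i * sBase q r i)]
  simp [Fin.init, hlast]

lemma expansion_succ_eq_tail (a : Fin (r + 2) → ℤ) :
    expansion q (r + 1) a = a 0 * sBase q (r + 1) 0 + q * expansion q r (Fin.tail a) := by
  rw [expansion, expansion, Fin.sum_univ_succ, mul_sum]
  congr 1
  refine sum_congr rfl fun i _ => ?_
  rw [Fin.val_succ, sBase_succ_succ, Fin.tail]
  ring

lemma expansion_add_mul_pow (a : Fin (r + 1) → ℤ) (c : ℤ) :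
    expansion q r a + c * q ^ (r + 1) =
      expansion q r (Function.update a (Fin.last r) (a (Fin.last r) + c * q)) := by
  simp only [expansion, Fin.sum_univ_castSucc, Function.update_self,
    Function.update_of_ne (Fin.castSucc_ne_last _), Fin.val_last, sBase_self]
  ring

lemma expansion_mul_sub_one (a : Fin (r + 1) → ℤ) :
    expansion q r a * (q - 1) = (∑ i, a i) * q ^ (r + 1) - ∑ i, a i * q ^ (i : ℕ) := by
  simp only [expansion, sum_mul, ← sum_sub_distrib]
  refine sum_congr rfl fun i _ => ?_
  rw [mul_assoc, sBase_mul_sub_one (Nat.le_succ_of_le i.is_le)]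
  ring

lemma sum_mul_pow_le_of_digits {n : ℕ} (hq : 0 ≤ q) (b : Fin n → ℤ)
    (hb : ∀ i, 0 ≤ b i ∧ b i ≤ q - 1) : ∑ i, b i * q ^ (i : ℕ) ≤ q ^ n - 1 := calc
  ∑ i, b i * q ^ (i : ℕ) ≤ ∑ i : Fin n, (q - 1) * q ^ (i : ℕ) :=
    sum_le_sum fun i _ => mul_le_mul_of_nonneg_right (hb i).2 (pow_nonneg hq _)
  _ = q ^ n - 1 := by
    rw [Fin.sum_univ_eq_sum_range (fun i => (q - 1) * q ^ i), ← mul_sum, mul_comm, geom_sum_mul]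

namespace IsDigitSeq

lemma init {a : Fin (r + 2) → ℤ} (ha : IsDigitSeq q (r + 1) a) : IsDigitSeq q r (Fin.init a) :=
  fun i hi => ha _ (by rw [Fin.val_castSucc]; omega)

lemma tail {a : Fin (r + 2) → ℤ} (ha : IsDigitSeq q (r + 1) a) : IsDigitSeq q r (Fin.tail a) :=
  fun i hi => ha _ (by rw [Fin.val_succ]; omega)

lemma update_last {a : Fin (r + 1) → ℤ} (ha : IsDigitSeq q r a) (x : ℤ) :
    IsDigitSeq q r (Function.update a (Fin.last r) x) := fun i hi => by
  rw [Function.update_of_ne (Fin.ne_of_lt hi)]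
  exact ha i hi

lemma last_eq_zero_of_expansion_eq_zero (hq : 0 < q) {a : Fin (r + 1) → ℤ}
    (ha : IsDigitSeq q r a) (h0 : expansion q r a = 0) : a (Fin.last r) = 0 := by
  induction r with
  | zero => rwa [expansion_zero] at h0
  | succ r ih =>
    rw [expansion_succ_eq_tail, sBase_succ_zero] at h0
    have ha0 : a 0 = 0 := by
      obtain ⟨h0le, h0lt⟩ := ha 0 (Nat.succ_pos r)
      refine Int.eq_zero_of_dvd_of_nonneg_of_lt h0le (by omega : a 0 < q)
        ⟨-(a 0 * sBase q r 0 + expansion q r (Fin.tail a)), ?_⟩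
      linear_combination h0
    have htail : expansion q r (Fin.tail a) = 0 := by
      rw [ha0] at h0
      simpa [hq.ne'] using h0
    exact ih ha.tail htail

lemma last_nonneg_of_sum_mul_pow_pos (hq : 0 < q) {a : Fin (r + 1) → ℤ} (ha : IsDigitSeq q r a)
    (hpos : 0 < ∑ i, a i * q ^ (i : ℕ)) : 0 ≤ a (Fin.last r) := by
  rw [Fin.sum_univ_castSucc] at hpos
  have hlow := sum_mul_pow_le_of_digits hq.le (fun i => a (Fin.castSucc i))
    fun i => ha _ (by simp)
  simp only [Fin.val_castSucc, Fin.val_last] at hpos hlow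
  by_contra! hneg
  nlinarith [pow_pos hq r]

end IsDigitSeq

end Expansion

lemma Multiset.card_filter_eq_sum_map_ite {α : Type*} (P : Multiset α) (p : α → Prop) :
    card (P.filter p) = (P.map fun x => if p x then 1 else 0).sum := by
  induction P using Multiset.induction_on with
  | empty => simp
  | cons x P ih => by_cases h : p x <;> simp [h, ih, add_comm]

lemma Finset.sum_card_filter_multiset {α β : Type*} (A : Finset α) (P : Multiset β)
    (R : β → α → Prop) :
    ∑ K ∈ A, Multiset.card (P.filter (R · K)) = (P.map fun X => #(A.filter (R X))).sum := by
  simp only [Multiset.card_filter_eq_sum_map_ite, card_filter]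
  exact Multiset.sum_map_sum_map A.val P

section Hyperplanes

variable {F V : Type*} [Field F] [AddCommGroup V] [Module F V] [Finite V]

noncomputable def hyperplanesAbove (S : Submodule F V) : Finset (Submodule F V) :=
  (Set.toFinite {K : Submodule F V | finrank F K + 1 = finrank F V ∧ S ≤ K}).toFinset

@[simp]
lemma mem_hyperplanesAbove {S K : Submodule F V} :
    K ∈ hyperplanesAbove S ↔ finrank F K + 1 = finrank F V ∧ S ≤ K :=
  Set.Finite.mem_toFinset _

lemma filter_hyperplanesAbove_le (S X : Submodule F V) :
    (hyperplanesAbove S).filter (X ≤ ·) = hyperplanesAbove (S ⊔ X) := by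
  ext K
  simp [sup_le_iff, and_assoc]

noncomputable def hyperplanesAboveEquiv (S : Submodule F V) :
    {K : Submodule F V // finrank F K + 1 = finrank F V ∧ S ≤ K} ≃
      {L : Submodule F S.dualAnnihilator // finrank F L = 1} where
  toFun K := ⟨K.1.dualAnnihilator.comap S.dualAnnihilator.subtype, by
    have hK := Subspace.finrank_add_finrank_dualAnnihilator_eq K.1
    rw [(Submodule.comapSubtypeEquivOfLe (Submodule.dualAnnihilator_anti K.2.2)).finrank_eq]
    omega⟩
  invFun L := ⟨(L.1.map S.dualAnnihilator.subtype).dualCoannihilator, by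
    have hL := Subspace.finrank_add_finrank_dualCoannihilator_eq (L.1.map S.dualAnnihilator.subtype)
    rw [Submodule.finrank_map_subtype_eq, L.2] at hL
    exact ⟨by omega, Submodule.le_dualAnnihilator_iff_le_dualCoannihilator.mp
      (Submodule.map_subtype_le _ _)⟩⟩
  left_inv K := Subtype.ext <| by
    simp only [Submodule.map_comap_subtype,
      inf_eq_right.mpr (Submodule.dualAnnihilator_anti K.2.2),
      Subspace.dualAnnihilator_dualCoannihilator_eq]
  right_inv L := Subtype.ext <| by
    simp only [Subspace.dualCoannihilator_dualAnnihilator_eq,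
      Submodule.comap_map_eq_of_injective S.dualAnnihilator.injective_subtype]

lemma card_hyperplanesAbove [Fintype F] (S : Submodule F V) :
    #(hyperplanesAbove S) = ∑ i ∈ range (finrank F V - finrank F S), Fintype.card F ^ i := by
  have hS := Subspace.finrank_add_finrank_dualAnnihilator_eq S
  rw [hyperplanesAbove, ← Nat.card_eq_card_finite_toFinset, ← Nat.card_eq_fintype_card,
    ← Projectivization.card_of_finrank F S.dualAnnihilator (by omega)]
  exact Nat.card_congr
    ((hyperplanesAboveEquiv S).trans (Projectivization.equivSubmodule F S.dualAnnihilator).symm)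

lemma finrank_sup_of_not_le {S X : Submodule F V} (hX : finrank F X = 1) (hXS : ¬ X ≤ S) :
    finrank F ↥(S ⊔ X) = finrank F S + 1 := by
  have hinf := Submodule.finrank_lt_finrank_of_lt (inf_lt_right.mpr hXS)
  have := Submodule.finrank_sup_add_finrank_inf_eq S X
  omega

lemma sum_card_filter_hyperplanesAbove (S : Submodule F V) (P : Multiset (Submodule F V)) :
    ∑ K ∈ hyperplanesAbove S, Multiset.card (P.filter (· ≤ K)) =
      (P.map fun X => #(hyperplanesAbove (S ⊔ X))).sum := by
  simp only [Finset.sum_card_filter_multiset, filter_hyperplanesAbove_le]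

lemma sum_card_filter_hyperplanesAbove_of_codim_two [Fintype F] {S : Submodule F V}
    (hS : finrank F S + 2 = finrank F V) {P : Multiset (Submodule F V)}
    (hP : ∀ X ∈ P, finrank F X = 1) :
    ∑ K ∈ hyperplanesAbove S, Multiset.card (P.filter (· ≤ K)) =
      Fintype.card F * Multiset.card (P.filter (· ≤ S)) + Multiset.card P := by
  have hcount : ∀ X ∈ P, #(hyperplanesAbove (S ⊔ X)) =
      Fintype.card F * (if X ≤ S then 1 else 0) + 1 := by
    intro X hX
    rw [card_hyperplanesAbove]
    by_cases hXS : X ≤ S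
    · rw [sup_eq_left.mpr hXS, if_pos hXS, show finrank F V - finrank F S = 2 by omega]
      simp [sum_range_succ, add_comm]
    · rw [finrank_sup_of_not_le (hP X hX) hXS, if_neg hXS,
        show finrank F V - (finrank F S + 1) = 1 by omega]
      simp
  rw [sum_card_filter_hyperplanesAbove, Multiset.map_congr rfl hcount, Multiset.sum_map_add,
    Multiset.sum_map_mul_left, ← Multiset.card_filter_eq_sum_map_ite]
  simp

lemma exists_hyperplane_mul_card_filter_lt [Fintype F] {P : Multiset (Submodule F V)}
    (hP : ∀ X ∈ P, finrank F X = 1) (hne : P ≠ 0) :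
    ∃ K : Submodule F V, finrank F K + 1 = finrank F V ∧
      Fintype.card F * Multiset.card (P.filter (· ≤ K)) < Multiset.card P := by
  set q := Fintype.card F
  obtain ⟨X₀, hX₀⟩ := Multiset.exists_mem_of_ne_zero hne
  obtain ⟨v, hv⟩ : ∃ v, finrank F V = v + 1 :=
    Nat.exists_eq_add_of_le' (hP X₀ hX₀ ▸ Submodule.finrank_le X₀)
  set N := ∑ i ∈ range v, q ^ i
  have hA : #(hyperplanesAbove (⊥ : Submodule F V)) = q * N + 1 := by
    rw [card_hyperplanesAbove, finrank_bot, hv, Nat.sub_zero, geom_sum_succ]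
  have hsum : ∑ K ∈ hyperplanesAbove (⊥ : Submodule F V), Multiset.card (P.filter (· ≤ K)) =
      Multiset.card P * N := by
    rw [sum_card_filter_hyperplanesAbove, Multiset.map_congr rfl (g := fun _ => N) fun X hX => by
      rw [bot_sup_eq, card_hyperplanesAbove, hP X hX, hv, Nat.add_sub_cancel],
      Multiset.map_const', Multiset.sum_replicate, smul_eq_mul]
  have hn : 0 < Multiset.card P := Multiset.card_pos.mpr hne
  have hlt :
      ∑ K ∈ hyperplanesAbove (⊥ : Submodule F V), q * Multiset.card (P.filter (· ≤ K)) <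
      ∑ K ∈ hyperplanesAbove (⊥ : Submodule F V), Multiset.card P := by
    rw [← mul_sum, hsum, sum_const, hA, smul_eq_mul]
    nlinarith
  obtain ⟨K, hK, hKlt⟩ := exists_lt_of_sum_lt hlt
  exact ⟨K, (mem_hyperplanesAbove.mp hK).1, hKlt⟩

end Hyperplanes

section Divisibility

variable {F V : Type} [Field F] [Fintype F] [AddCommGroup V] [Module F V] [Finite V]

lemma IsDivisible.card_filter_modEq_of_codim_two {r : ℕ} {P : Multiset (Submodule F V)}
    (hP : IsDivisible F (r + 1) P) {S : Submodule F V} (hS : finrank F S + 2 = finrank F V) :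
    Multiset.card (P.filter (· ≤ S)) ≡ Multiset.card P [MOD Fintype.card F ^ r] := by
  have hq : (Fintype.card F : ℤ) ≠ 0 := by exact_mod_cast Fintype.card_ne_zero
  have hA : #(hyperplanesAbove S) = Fintype.card F + 1 := by
    rw [card_hyperplanesAbove, show finrank F V - finrank F S = 2 by omega]
    simp [sum_range_succ, add_comm]
  have hsum : ∑ K ∈ hyperplanesAbove S,
      ((Multiset.card P : ℤ) - Multiset.card (P.filter (· ≤ K))) =
        Fintype.card F * ((Multiset.card P : ℤ) - Multiset.card (P.filter (· ≤ S))) := by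
    rw [sum_sub_distrib, sum_const, hA, ← Nat.cast_sum,
      sum_card_filter_hyperplanesAbove_of_codim_two hS hP.1]
    push_cast
    ring
  have hdvd : (Fintype.card F : ℤ) ^ (r + 1) ∣
      Fintype.card F * ((Multiset.card P : ℤ) - Multiset.card (P.filter (· ≤ S))) :=
    hsum ▸ dvd_sum fun K hK => by
      exact_mod_cast (Nat.modEq_iff_dvd.mp (hP.2 K (mem_hyperplanesAbove.mp hK).1))
  rw [pow_succ', mul_dvd_mul_iff_left hq] at hdvd
  exact Nat.modEq_iff_dvd.mpr (by exact_mod_cast hdvd)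

lemma IsDivisible.restrict {r : ℕ} {P : Multiset (Submodule F V)} (hP : IsDivisible F (r + 1) P)
    {H : Submodule F V} (hH : finrank F H + 1 = finrank F V) :
    IsDivisible F r ((P.filter (· ≤ H)).map (Submodule.comap H.subtype)) := by
  refine ⟨fun Y hY => ?_, fun H' hH' => ?_⟩
  · obtain ⟨X, hX, rfl⟩ := Multiset.mem_map.mp hY
    rw [Multiset.mem_filter] at hX
    rw [(Submodule.comapSubtypeEquivOfLe hX.2).finrank_eq, hP.1 X hX.1]
  · set S := H'.map H.subtype
    have hSH : S ≤ H := Submodule.map_subtype_le H H'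
    have hS : finrank F S + 2 = finrank F V := by
      rw [Submodule.finrank_map_subtype_eq]
      omega
    have hfilter : ((P.filter (· ≤ H)).map (Submodule.comap H.subtype)).filter (· ≤ H') =
        ((P.filter (· ≤ S)).map (Submodule.comap H.subtype)) := by
      rw [Multiset.filter_map, Multiset.filter_filter]
      congr 1
      refine Multiset.filter_congr fun X _ => ?_
      rw [Function.comp_apply, ← Submodule.map_le_map_iff_of_injective H.injective_subtype,
        Submodule.map_comap_subtype]
      exact ⟨fun h => inf_eq_right.mpr h.2 ▸ h.1,
        fun h => ⟨inf_le_right.trans h, h.trans hSH⟩⟩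
    rw [hfilter, Multiset.card_map, Multiset.card_map]
    exact (hP.card_filter_modEq_of_codim_two hS).trans
      (Nat.ModEq.of_dvd (pow_dvd_pow _ r.le_succ) (hP.2 H hH)).symm

end Divisibility

def TopDigitNonneg (F : Type) [Field F] [Fintype F] (r : ℕ) : Prop :=
  ∀ (V : Type) [AddCommGroup V] [Module F V] [Finite V] (P : Multiset (Submodule F V))
    (a : Fin (r + 1) → ℤ), IsDivisible F r P → IsDigitSeq (Fintype.card F) r a →
      (Multiset.card P : ℤ) = expansion (Fintype.card F) r a → 0 ≤ a (Fin.last r)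

section TopDigit

variable {F : Type} [Field F] [Fintype F]

lemma topDigitNonneg_zero : TopDigitNonneg F 0 := by
  intro V _ _ _ P a _ _ hn
  rw [expansion_zero] at hn
  exact hn ▸ Nat.cast_nonneg _

lemma TopDigitNonneg.le_sum {r : ℕ} (hr : TopDigitNonneg F r) {V : Type} [AddCommGroup V]
    [Module F V] [Finite V] {P : Multiset (Submodule F V)} (hP : IsDivisible F (r + 1) P)
    {a : Fin (r + 2) → ℤ} (ha : IsDigitSeq (Fintype.card F) (r + 1) a)
    (hn : (Multiset.card P : ℤ) = expansion (Fintype.card F) (r + 1) a)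
    {H : Submodule F V} (hH : finrank F H + 1 = finrank F V) {τ : ℤ}
    (hτ : (Multiset.card P : ℤ) - Multiset.card (P.filter (· ≤ H)) =
      τ * (Fintype.card F : ℤ) ^ (r + 1)) :
    τ ≤ ∑ i, a i := by
  set q : ℤ := (Fintype.card F : ℤ)
  set a' := Function.update (Fin.init a) (Fin.last r)
    (Fin.init a (Fin.last r) + ((∑ i, a i) - τ) * q)
  have hm : (Multiset.card ((P.filter (· ≤ H)).map (Submodule.comap H.subtype)) : ℤ) =
      expansion q r a' := by
    rw [← expansion_add_mul_pow, Multiset.card_map]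
    rw [expansion_succ] at hn
    linear_combination hn - hτ
  have htop := hr H _ a' (hP.restrict hH) (ha.init.update_last _) hm
  have hlast : Fin.init a (Fin.last r) ≤ q - 1 := (ha (Fin.castSucc (Fin.last r)) (by simp)).2
  have hq : 0 ≤ q := Nat.cast_nonneg _
  simp only [a', Function.update_self] at htop
  by_contra! hlt
  have : ((∑ i, a i) - τ) * q ≤ -1 * q := mul_le_mul_of_nonneg_right (by omega) hq
  linarith

lemma TopDigitNonneg.succ {r : ℕ} (hr : TopDigitNonneg F r) : TopDigitNonneg F (r + 1) := by
  intro V _ _ _ P a hP ha hn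
  have hq : (0 : ℤ) < Fintype.card F := Nat.cast_pos.mpr Fintype.card_pos
  rcases eq_or_ne P 0 with rfl | hne
  · exact (ha.last_eq_zero_of_expansion_eq_zero hq (by simpa using hn.symm)).ge
  obtain ⟨K, hK, hsmall⟩ := exists_hyperplane_mul_card_filter_lt hP.1 hne
  obtain ⟨τ, hτ⟩ := Nat.modEq_iff_dvd.mp (hP.2 K hK)
  push_cast at hτ hsmall
  have hτσ := hr.le_sum hP ha hn hK (τ := τ) (by rw [hτ, mul_comm])
  set q : ℤ := (Fintype.card F : ℤ)
  set σ := ∑ i, a i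
  have hlt : expansion q (r + 1) a * (q - 1) < σ * q ^ (r + 2) := calc
    _ = τ * q ^ (r + 2) + (q * Multiset.card (P.filter (· ≤ K)) - Multiset.card P) := by
      rw [← hn, pow_succ' q (r + 1)]
      linear_combination q * hτ
    _ < τ * q ^ (r + 2) := by linarith
    _ ≤ σ * q ^ (r + 2) := mul_le_mul_of_nonneg_right hτσ (pow_nonneg hq.le _)
  refine ha.last_nonneg_of_sum_mul_pow_pos hq ?_
  linarith [expansion_mul_sub_one (q := q) a]

lemma topDigitNonneg (r : ℕ) : TopDigitNonneg F r := by
  induction r with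
  | zero => exact topDigitNonneg_zero
  | succ r ih => exact ih.succ

end TopDigit

theorem tau_le_cross_sum_general (F : Type) [Field F] [Fintype F] (V : Type) [AddCommGroup V]
    [Module F V] [FiniteDimensional F V] (r : ℕ)
    (P : Multiset (Submodule F V)) (hP : IsDivisible F r P)
    (a : Fin (r + 1) → ℤ)
    (ha : ∀ i : Fin (r + 1), (i : ℕ) < r → 0 ≤ a i ∧ a i ≤ (Fintype.card F : ℤ) - 1)
    (hn : (Multiset.card P : ℤ) =
      ∑ i : Fin (r + 1), a i * ∑ j ∈ Finset.Icc (i : ℕ) r, (Fintype.card F : ℤ) ^ j)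
    (H : Submodule F V) (hH : Module.finrank F ↥H + 1 = Module.finrank F V)
    (τ : ℤ)
    (hτ : (Multiset.card P : ℤ) - (Multiset.card (P.filter (fun X => X ≤ H)) : ℤ) =
      τ * (Fintype.card F : ℤ) ^ r) :
    τ ≤ ∑ i : Fin (r + 1), a i := by
  have : Finite V := Module.finite_of_finite F
  cases r with
  | zero =>
    have hn' : (Multiset.card P : ℤ) = a 0 := hn.trans (expansion_zero a)
    simp only [pow_zero, mul_one] at hτ
    rw [Fin.sum_univ_one]
    omega
  | succ r => exact (topDigitNonneg r).le_sum hP ha hn hH hτ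

/-- For a non-empty `q^r`-divisible multiset `P` of points of cardinality `n` with `S_q(r)`-adic
expansion digits `a` (and cross sum `σ = Σ a_i`): for every hyperplane `H`, writing
`#P - #(P ∩ H) = τ·q^r`, one has `τ ≤ σ`. -/
theorem tau_le_cross_sum (F : Type) [Field F] [Fintype F] (V : Type) [AddCommGroup V]
    [Module F V] [FiniteDimensional F V] (r : ℕ)
    (P : Multiset (Submodule F V)) (hP : IsDivisible F r P) (hne : P ≠ 0)
    (a : Fin (r + 1) → ℤ)
    (ha : ∀ i : Fin (r + 1), (i : ℕ) < r → 0 ≤ a i ∧ a i ≤ (Fintype.card F : ℤ) - 1)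
    (hn : (Multiset.card P : ℤ) =
      ∑ i : Fin (r + 1), a i * ∑ j ∈ Finset.Icc (i : ℕ) r, (Fintype.card F : ℤ) ^ j)
    (H : Submodule F V) (hH : Module.finrank F ↥H + 1 = Module.finrank F V)
    (τ : ℤ)
    (hτ : (Multiset.card P : ℤ) - (Multiset.card (P.filter (fun X => X ≤ H)) : ℤ) =
      τ * (Fintype.card F : ℤ) ^ r) :
    τ ≤ ∑ i : Fin (r + 1), a i :=
  tau_le_cross_sum_general F V r P hP a ha hn H hH τ hτ
end
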